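/- arXiv:1504.06334 — 2 statements merged into one kernel-verified Lean document; each statement's English description precedes it below -/
import Mathlib

section
/- Let p > 1 and let ω_p be the inverse of H_p(z) = -(p-1)z^p + p z^{p-1} on [1, p/(p-1)]. Let g : (0,1] → ℝ≥0 be non-increasing with ∫_0^1 g^p = F and ∫_0^1 g = f, where 0 < f^p ≤ F. Then ∫_0^1 (t^{-1} ∫_0^t g(u) du)^p dt ≤ F · ω_p(f^p / F)^p. -/
open Set MeasureTheory Filter Topology intervalIntegral

lemma holder_set {s : Set ℝ} (hs : MeasurableSet s) {p q : ℝ}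
    (hpq : Real.HolderConjugate p q) {u v : ℝ → ℝ}
    (hu : ∀ x ∈ s, 0 ≤ u x) (hv : ∀ x ∈ s, 0 ≤ v x)
    (hup : IntegrableOn (fun x => u x ^ p) s)
    (hvq : IntegrableOn (fun x => v x ^ q) s) :
    ∫ x in s, u x * v x ≤ (∫ x in s, u x ^ p) ^ (1/p) * (∫ x in s, v x ^ q) ^ (1/q) := by
  have hp0 : 0 < p := hpq.pos
  have hq0 : 0 < q := hpq.symm.pos
  have hinv : 1/p + 1/q = 1 := by simpa [one_div] using hpq.inv_add_inv_eq_one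
  have hpq' : p + q = p * q := by
    have h := hpq.inv_add_inv_eq_one
    field_simp at h
    linarith
  set P := ∫ x in s, u x ^ p with hP
  set Q := ∫ x in s, v x ^ q with hQ
  have hP0 : 0 ≤ P := setIntegral_nonneg hs fun x hx => Real.rpow_nonneg (hu x hx) p
  have hQ0 : 0 ≤ Q := setIntegral_nonneg hs fun x hx => Real.rpow_nonneg (hv x hx) q
  have young : ∀ lam : ℝ, 0 < lam →
      ∫ x in s, u x * v x ≤ (lam ^ (-p) / p) * P + (lam ^ q / q) * Q := by
    intro lam hlam
    have hpt : ∀ x ∈ s, u x * v x ≤ (lam ^ (-p) / p) * u x ^ p + (lam ^ q / q) * v x ^ q := by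
      intro x hx
      have h := Real.young_inequality_of_nonneg
        (mul_nonneg (hu x hx) (inv_nonneg.2 hlam.le)) (mul_nonneg hlam.le (hv x hx)) hpq
      have e0 : u x * lam⁻¹ * (lam * v x) = u x * v x := by
        field_simp
      rw [e0] at h
      have e1 : (u x * lam⁻¹) ^ p = lam ^ (-p) * u x ^ p := by
        rw [Real.mul_rpow (hu x hx) (inv_nonneg.2 hlam.le), Real.inv_rpow hlam.le,
          ← Real.rpow_neg hlam.le]
        ring
      have e2 : (lam * v x) ^ q = lam ^ q * v x ^ q := by
        rw [Real.mul_rpow hlam.le (hv x hx)]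
      rw [e1, e2] at h
      calc u x * v x ≤ lam ^ (-p) * u x ^ p / p + lam ^ q * v x ^ q / q := h
        _ = (lam ^ (-p) / p) * u x ^ p + (lam ^ q / q) * v x ^ q := by ring
    have hint : Integrable (fun x => (lam ^ (-p) / p) * u x ^ p + (lam ^ q / q) * v x ^ q)
        (volume.restrict s) := (hup.const_mul _).add (hvq.const_mul _)
    calc ∫ x in s, u x * v x
        ≤ ∫ x in s, ((lam ^ (-p) / p) * u x ^ p + (lam ^ q / q) * v x ^ q) := by
          apply integral_mono_of_nonneg
          · exact (ae_restrict_iff' hs).2 (ae_of_all _ fun x hx =>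
              mul_nonneg (hu x hx) (hv x hx))
          · exact hint
          · exact (ae_restrict_iff' hs).2 (ae_of_all _ hpt)
      _ = (lam ^ (-p) / p) * P + (lam ^ q / q) * Q := by
          rw [integral_add (hup.const_mul _) (hvq.const_mul _), MeasureTheory.integral_const_mul,
            MeasureTheory.integral_const_mul]
  rcases eq_or_lt_of_le hP0 with hPz | hPpos
  · have hu0 : (fun x => u x ^ p) =ᵐ[volume.restrict s] 0 := by
      refine (integral_eq_zero_iff_of_nonneg_ae ?_ hup).1 hPz.symm
      exact (ae_restrict_iff' hs).2 (ae_of_all _ fun x hx => Real.rpow_nonneg (hu x hx) p)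
    have huv0 : (fun x => u x * v x) =ᵐ[volume.restrict s] 0 := by
      filter_upwards [hu0, (ae_restrict_iff' hs).2 (ae_of_all _ hu)] with x h1 h2
      have : u x = 0 := by
        by_contra h
        have hx : 0 < u x := lt_of_le_of_ne h2 (Ne.symm h)
        exact absurd h1 (ne_of_gt (Real.rpow_pos_of_pos hx p))
      simp [this]
    rw [integral_congr_ae huv0, ← hPz]
    simp only [Pi.zero_apply, MeasureTheory.integral_zero]
    exact mul_nonneg (Real.rpow_nonneg le_rfl _) (Real.rpow_nonneg hQ0 _)
  rcases eq_or_lt_of_le hQ0 with hQz | hQpos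
  · have hv0 : (fun x => v x ^ q) =ᵐ[volume.restrict s] 0 := by
      refine (integral_eq_zero_iff_of_nonneg_ae ?_ hvq).1 hQz.symm
      exact (ae_restrict_iff' hs).2 (ae_of_all _ fun x hx => Real.rpow_nonneg (hv x hx) q)
    have huv0 : (fun x => u x * v x) =ᵐ[volume.restrict s] 0 := by
      filter_upwards [hv0, (ae_restrict_iff' hs).2 (ae_of_all _ hv)] with x h1 h2
      have : v x = 0 := by
        by_contra h
        have hx : 0 < v x := lt_of_le_of_ne h2 (Ne.symm h)
        exact absurd h1 (ne_of_gt (Real.rpow_pos_of_pos hx q))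
      simp [this]
    rw [integral_congr_ae huv0, ← hQz]
    simp only [Pi.zero_apply, MeasureTheory.integral_zero]
    exact mul_nonneg (Real.rpow_nonneg hPpos.le _) (Real.rpow_nonneg le_rfl _)
  -- main case
  set lam := (P / Q) ^ (1/(p+q)) with hlam
  have hPQ : 0 < P / Q := div_pos hPpos hQpos
  have hlam0 : 0 < lam := Real.rpow_pos_of_pos hPQ _
  have hppq : 0 < p + q := by positivity
  have hPsplit : P = P ^ (1/p) * P ^ (1/q) := by
    rw [← Real.rpow_add hPpos, hinv, Real.rpow_one]
  have hQsplit : Q = Q ^ (1/p) * Q ^ (1/q) := by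
    rw [← Real.rpow_add hQpos, hinv, Real.rpow_one]
  have hPq : (0:ℝ) < P ^ (1/q) := Real.rpow_pos_of_pos hPpos _
  have hQp : (0:ℝ) < Q ^ (1/p) := Real.rpow_pos_of_pos hQpos _
  have e1 : lam ^ (-p) * P = P ^ (1/p) * Q ^ (1/q) := by
    rw [hlam, ← Real.rpow_mul hPQ.le]
    have hx : 1/(p+q) * (-p) = -(1/q) := by
      rw [hpq']
      field_simp
    rw [hx, Real.rpow_neg hPQ.le, Real.div_rpow hPpos.le hQpos.le, inv_div]
    calc Q ^ (1/q) / P ^ (1/q) * P = Q ^ (1/q) / P ^ (1/q) * (P ^ (1/p) * P ^ (1/q)) := by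
          rw [← hPsplit]
      _ = P ^ (1/p) * Q ^ (1/q) := by field_simp
  have e2 : lam ^ q * Q = P ^ (1/p) * Q ^ (1/q) := by
    rw [hlam, ← Real.rpow_mul hPQ.le]
    have hx : 1/(p+q) * q = 1/p := by
      rw [hpq']
      field_simp
    rw [hx, Real.div_rpow hPpos.le hQpos.le]
    calc P ^ (1/p) / Q ^ (1/p) * Q = P ^ (1/p) / Q ^ (1/p) * (Q ^ (1/p) * Q ^ (1/q)) := by
          rw [← hQsplit]
      _ = P ^ (1/p) * Q ^ (1/q) := by field_simp
  refine le_trans (young lam hlam0) (le_of_eq ?_)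
  calc lam ^ (-p) / p * P + lam ^ q / q * Q
      = (lam ^ (-p) * P) * (1/p) + (lam ^ q * Q) * (1/q) := by ring
    _ = P ^ (1/p) * Q ^ (1/q) * (1/p + 1/q) := by rw [e1, e2]; ring
    _ = P ^ (1/p) * Q ^ (1/q) := by rw [hinv, mul_one]


lemma scalar_step {p q S Fv fp w : ℝ} (hp : 1 < p) (hq : q = p/(p-1))
    (hF : 0 < Fv) (hw1 : 1 ≤ w)
    (hweq : -(p-1)*w^p + p*w^(p-1) = fp/Fv)
    (hkey : (p-1)*S + fp ≤ p * (S^(1/q) * Fv^(1/p))) :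
    S ≤ Fv * w^p := by
  have hp0 : 0 < p := lt_trans one_pos hp
  have hp1 : 0 < p - 1 := sub_pos.2 hp
  have hq0 : 0 < q := by rw [hq]; positivity
  have hinv : 1/p + 1/q = 1 := by rw [hq]; field_simp; ring
  have h1q : 1/q = (p-1)/p := by rw [hq]; field_simp
  by_contra hcon
  push_neg at hcon
  have hwp1 : (1:ℝ) ≤ w ^ p := by
    calc (1:ℝ) = 1 ^ p := (Real.one_rpow p).symm
    _ ≤ w ^ p := Real.rpow_le_rpow zero_le_one hw1 hp0.le
  have hS0 : 0 < S := lt_trans (by nlinarith) hcon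
  set u := S / Fv with hu
  have hu0 : 0 < u := div_pos hS0 hF
  have huw : w ^ p < u := (lt_div_iff₀ hF).2 (by linarith)
  have hu1 : 1 < u := lt_of_le_of_lt hwp1 huw
  -- divide key inequality by Fv
  have hSuF : S = u * Fv := by rw [hu]; field_simp
  have key2 : (p-1)*u + fp/Fv ≤ p * u^(1/q) := by
    have hrw : S ^ (1/q) * Fv ^ (1/p) = u ^ (1/q) * Fv := by
      rw [hSuF, Real.mul_rpow hu0.le hF.le]
      rw [mul_assoc, ← Real.rpow_add hF, add_comm (1/q) (1/p), hinv, Real.rpow_one]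
    rw [hrw] at hkey
    have h2 : ((p-1)*u + fp/Fv) * Fv ≤ (p * u^(1/q)) * Fv := by
      calc ((p-1)*u + fp/Fv) * Fv = (p-1)*(u*Fv) + fp := by field_simp
      _ ≤ (p * u^(1/q)) * Fv := by rw [← hSuF]; linarith
    exact le_of_mul_le_mul_right h2 hF
  -- the function φ
  set φ : ℝ → ℝ := fun y => p * y^(1/q) - (p-1)*y with hφ
  have hanti : StrictAntiOn φ (Ici (1:ℝ)) := by
    apply strictAntiOn_of_deriv_neg (convex_Ici 1)
    · apply ContinuousOn.sub
      · exact continuousOn_const.mul (continuousOn_id.rpow_const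
          (fun x hx => Or.inl (ne_of_gt (lt_of_lt_of_le one_pos hx))))
      · exact continuousOn_const.mul continuousOn_id
    · intro y hy
      rw [interior_Ici] at hy
      have hy1 : 1 < y := hy
      have hy0 : 0 < y := lt_trans one_pos hy1
      have hd : HasDerivAt φ (p * (1/q * y^(1/q - 1)) - (p-1)*1) y := by
        have h1 : HasDerivAt (fun y : ℝ => y^(1/q)) (1/q * y^(1/q-1)) y :=
          Real.hasDerivAt_rpow_const (Or.inl hy0.ne')
        exact (h1.const_mul p).sub ((hasDerivAt_id y).const_mul (p-1))
      rw [hd.deriv]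
      have hexp : 1/q - 1 < 0 := by
        rw [h1q, div_sub_one hp0.ne']
        ring_nf
        exact neg_neg_of_pos (inv_pos.2 hp0)
      have hyc : y^(1/q - 1) < 1 := Real.rpow_lt_one_of_one_lt_of_neg hy1 hexp
      have hpq1 : p * (1/q) = p - 1 := by rw [h1q]; field_simp
      have : p * (1/q * y^(1/q-1)) = (p-1) * y^(1/q-1) := by rw [← mul_assoc, hpq1]
      rw [this]
      nlinarith [Real.rpow_nonneg hy0.le (1/q - 1)]
  have hφw : φ (w^p) = fp/Fv := by
    have e : (w^p)^(1/q) = w^(p-1) := by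
      rw [← Real.rpow_mul (le_trans zero_le_one hw1), h1q]
      congr 1
      field_simp
    rw [hφ]
    simp only
    rw [e]
    linarith [hweq]
  have hφu : fp/Fv ≤ φ u := by rw [hφ]; simp only; linarith
  have : φ u < φ (w^p) := hanti hwp1 (le_of_lt hu1) huw
  rw [hφw] at this
  linarith


/-- The `k = 1` case: `∫₀¹ (t⁻¹ ∫₀ᵗ g)^p dt ≤ F ω_p(f^p/F)^p` when
`∫₀¹ g = f` and `∫₀¹ g^p = F`. -/
theorem avg_pow_integral_le_Bellman (p : ℝ) (hp : 1 < p) (ω : ℝ → ℝ)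
    (hω : ∀ x ∈ Set.Icc (0:ℝ) 1, ω x ∈ Set.Icc 1 (p / (p - 1)) ∧
      -(p - 1) * ω x ^ p + p * ω x ^ (p - 1) = x)
    (g : ℝ → ℝ) (hg_nonneg : ∀ t ∈ Set.Ioc (0:ℝ) 1, 0 ≤ g t)
    (hg_anti : AntitoneOn g (Set.Ioc 0 1))
    (hg_p : IntegrableOn (fun u => g u ^ p) (Set.Ioc 0 1))
    (f F : ℝ) (hf : 0 < f) (hfF : f ^ p ≤ F)
    (hgf : ∫ u in Set.Ioc (0:ℝ) 1, g u = f)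
    (hgF : ∫ u in Set.Ioc (0:ℝ) 1, g u ^ p = F) :
    ∫ t in Set.Ioc (0:ℝ) 1, ((1 / t) * ∫ u in Set.Ioc (0:ℝ) t, g u) ^ p ≤
      F * ω (f ^ p / F) ^ p := by
  have hp0 : 0 < p := lt_trans one_pos hp
  have hp1 : 0 < p - 1 := sub_pos.2 hp
  set q : ℝ := p / (p - 1) with hqdef
  have hq0 : 0 < q := by positivity
  have hpq : p.HolderConjugate q := Real.HolderConjugate.conjExponent hp
  have hF : 0 < F := lt_of_lt_of_le (Real.rpow_pos_of_pos hf p) hfF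
  have hx01 : f ^ p / F ∈ Icc (0:ℝ) 1 :=
    ⟨div_nonneg (Real.rpow_pos_of_pos hf p).le hF.le, (div_le_one hF).2 hfF⟩
  obtain ⟨⟨hw1, _⟩, hweq⟩ := hω _ hx01
  have hRHS0 : 0 ≤ F * ω (f ^ p / F) ^ p :=
    mul_nonneg hF.le (Real.rpow_nonneg (le_trans zero_le_one hw1) p)
  by_cases hInt : IntegrableOn (fun t => ((1 / t) * ∫ u in Set.Ioc (0:ℝ) t, g u) ^ p) (Ioc 0 1)
  swap
  · rw [integral_undef hInt]; exact hRHS0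
  set Gf : ℝ → ℝ := fun t => ∫ u in Set.Ioc (0:ℝ) t, g u with hGdef
  have hgInt : IntegrableOn g (Ioc 0 1) := by
    by_contra h
    rw [integral_undef h] at hgf
    exact absurd hgf.symm (ne_of_gt hf)
  have hGnn : ∀ t, t ≤ 1 → 0 ≤ Gf t := by
    intro t ht
    exact setIntegral_nonneg measurableSet_Ioc fun u hu => hg_nonneg u ⟨hu.1, le_trans hu.2 ht⟩
  have hGsplit : ∀ a b : ℝ, 0 ≤ a → a ≤ b → b ≤ 1 → Gf b - Gf a = ∫ u in Ioc a b, g u := by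
    intro a b ha hab hb1
    have h1 : Ioc (0:ℝ) a ∪ Ioc a b = Ioc 0 b := Ioc_union_Ioc_eq_Ioc ha hab
    have h2 := setIntegral_union (Ioc_disjoint_Ioc_of_le (a := (0:ℝ)) (b := a) (d := b) le_rfl)
      measurableSet_Ioc
      (hgInt.mono_set (Ioc_subset_Ioc le_rfl (le_trans hab hb1)))
      (hgInt.mono_set (fun x hx => ⟨lt_of_le_of_lt ha hx.1, le_trans hx.2 hb1⟩))
    rw [h1] at h2
    rw [hGdef]
    simp only
    rw [h2]
    ring
  have hGf1 : Gf 1 = f := hgf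
  have hGmono : ∀ a b : ℝ, 0 ≤ a → a ≤ b → b ≤ 1 → Gf a ≤ Gf b := by
    intro a b ha hab hb1
    have h := hGsplit a b ha hab hb1
    have h2 : 0 ≤ ∫ u in Ioc a b, g u := setIntegral_nonneg measurableSet_Ioc
      (fun u hu => hg_nonneg u ⟨lt_of_le_of_lt ha hu.1, le_trans hu.2 hb1⟩)
    linarith
  have hGle : ∀ t ∈ Icc (0:ℝ) 1, Gf t ≤ f := fun t ht => hGf1 ▸ hGmono t 1 ht.1 ht.2 le_rfl
  have hGcont : ContinuousOn Gf (Icc 0 1) := by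
    have h : IntegrableOn g (Icc 0 1) := by rwa [integrableOn_Icc_iff_integrableOn_Ioc]
    exact intervalIntegral.continuousOn_primitive h
  have hΦbound : ∀ ε : ℝ, 0 < ε → ε ≤ 1 →
      Gf ε ^ p * ε ^ (1 - p) ≤ ∫ u in Ioc (0:ℝ) ε, g u ^ p := by
    intro ε hε0 hε1
    have hsub : Ioc (0:ℝ) ε ⊆ Ioc 0 1 := Ioc_subset_Ioc le_rfl hε1
    set Fε := ∫ u in Ioc (0:ℝ) ε, g u ^ p with hFε
    have hFε0 : 0 ≤ Fε := setIntegral_nonneg measurableSet_Ioc fun u hu =>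
      Real.rpow_nonneg (hg_nonneg u (hsub hu)) p
    have hone : IntegrableOn (fun _ : ℝ => (1:ℝ) ^ q) (Ioc (0:ℝ) ε) := by
      simp only [Real.one_rpow]
      exact integrableOn_const measure_Ioc_lt_top.ne
    have h := holder_set measurableSet_Ioc hpq (fun x hx => hg_nonneg x (hsub hx))
      (fun x _ => zero_le_one) (hg_p.mono_set hsub) hone
    have h1 : ∫ x in Ioc (0:ℝ) ε, g x * 1 = Gf ε := by simp [hGdef]
    have h2 : ∫ x in Ioc (0:ℝ) ε, (1:ℝ) ^ q = ε := by
      simp [Real.one_rpow, Real.volume_Ioc, ENNReal.toReal_ofReal hε0.le, hε0.le]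
    rw [h1, h2] at h
    have hGε : Gf ε ^ p ≤ Fε * ε ^ (p - 1) := by
      have hqp : 1/q * p = p - 1 := by rw [hqdef]; field_simp
      calc Gf ε ^ p ≤ (Fε ^ (1/p) * ε ^ (1/q)) ^ p :=
            Real.rpow_le_rpow (hGnn ε hε1) h hp0.le
        _ = Fε * ε ^ (p-1) := by
            rw [Real.mul_rpow (Real.rpow_nonneg hFε0 _) (Real.rpow_nonneg hε0.le _),
              ← Real.rpow_mul hFε0, ← Real.rpow_mul hε0.le,
              one_div_mul_cancel hp0.ne', Real.rpow_one, hqp]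
    calc Gf ε ^ p * ε ^ (1-p) ≤ (Fε * ε ^ (p-1)) * ε ^ (1-p) :=
          mul_le_mul_of_nonneg_right hGε (Real.rpow_nonneg hε0.le _)
      _ = Fε := by
          rw [mul_assoc, ← Real.rpow_add hε0]
          norm_num
  set S := ∫ t in Ioc (0:ℝ) 1, ((1 / t) * Gf t) ^ p with hS
  have key : ∀ ε : ℝ, 0 < ε → ε < 1 →
      (p-1) * (∫ t in Ioc ε 1, ((1 / t) * Gf t) ^ p) + f ^ p
        ≤ p * (S ^ (1/q) * F ^ (1/p)) + (F - ∫ t in Ioc ε 1, g t ^ p) := by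
    intro ε hε0 hε1
    have hε01 : ε ∈ Ioc (0:ℝ) 1 := ⟨hε0, hε1.le⟩
    have hgε0 : 0 ≤ g ε := hg_nonneg ε hε01
    set R : ℝ → ℝ := fun t => sSup (g '' Ioc (max t ε) 1) with hRdef
    have hmem01 : ∀ s : ℝ, ε < s → s ≤ 1 → s ∈ Ioc (0:ℝ) 1 :=
      fun s h1 h2 => ⟨lt_trans hε0 h1, h2⟩
    have hbdd : ∀ t, BddAbove (g '' Ioc (max t ε) 1) := by
      intro t
      refine ⟨g ε, ?_⟩
      rintro y ⟨s, hs, rfl⟩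
      have hsε : ε < s := lt_of_le_of_lt (le_max_right t ε) hs.1
      exact hg_anti hε01 (hmem01 s hsε hs.2) hsε.le
    have hRnn : ∀ t, 0 ≤ R t := by
      intro t
      rcases le_or_gt 1 (max t ε) with h | h
      · have he : Ioc (max t ε) 1 = ∅ := Ioc_eq_empty (not_lt.2 h)
        rw [hRdef]
        simp only [he, image_empty]
        rw [Real.sSup_empty]
      · obtain ⟨s, hs⟩ : (Ioc (max t ε) 1).Nonempty := nonempty_Ioc.2 h
        have hsε : ε < s := lt_of_le_of_lt (le_max_right t ε) hs.1
        calc (0:ℝ) ≤ g s := hg_nonneg s (hmem01 s hsε hs.2)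
          _ ≤ R t := le_csSup (hbdd t) ⟨s, hs, rfl⟩
    have hRleε : ∀ t, R t ≤ g ε := by
      intro t
      rcases (g '' Ioc (max t ε) 1).eq_empty_or_nonempty with h | h
      · rw [hRdef]
        simp only [h]
        rw [Real.sSup_empty]
        exact hgε0
      · apply csSup_le h
        rintro y ⟨s, hs, rfl⟩
        have hsε : ε < s := lt_of_le_of_lt (le_max_right t ε) hs.1
        exact hg_anti hε01 (hmem01 s hsε hs.2) hsε.le
    have hmax : ∀ t : ℝ, ε ≤ t → max t ε = t := fun t ht => max_eq_left ht
    have hRle_g : ∀ t ∈ Ioo ε 1, R t ≤ g t := by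
      intro t ht
      have hne : (g '' Ioc (max t ε) 1).Nonempty := by
        rw [hmax t ht.1.le]
        exact (nonempty_Ioc.2 ht.2).image g
      apply csSup_le hne
      rintro y ⟨s, hs, rfl⟩
      rw [hmax t ht.1.le] at hs
      exact hg_anti (hmem01 t ht.1 ht.2.le) (hmem01 s (lt_trans ht.1 hs.1) hs.2) hs.1.le
    have hg_le_R : ∀ t s : ℝ, ε ≤ t → t < s → s ≤ 1 → g s ≤ R t := by
      intro t s h1 h2 h3
      refine le_csSup (hbdd t) ⟨s, ?_, rfl⟩
      rw [hmax t h1]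
      exact ⟨h2, h3⟩
    have hRanti : Antitone R := by
      intro a b hab
      rcases (g '' Ioc (max b ε) 1).eq_empty_or_nonempty with h | h
      · have hb0 : R b = 0 := by
          rw [hRdef]
          simp only [h]
          exact Real.sSup_empty
        rw [hb0]
        exact hRnn a
      · exact csSup_le_csSup (hbdd a) h
          (image_mono (Ioc_subset_Ioc (max_le_max hab le_rfl) le_rfl))
    have hRmeas : Measurable R := hRanti.measurable
    have hGderiv : ∀ t ∈ Ioo ε 1, HasDerivWithinAt Gf (R t) (Ioi t) t := by
      intro t ht
      have ht0 : 0 < t := lt_trans hε0 ht.1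
      refine HasDerivWithinAt.mono_of_mem_nhdsWithin (t := Ioo t 1) ?_
        (Ioo_mem_nhdsGT_of_mem ⟨le_rfl, ht.2⟩)
      rw [hasDerivWithinAt_iff_tendsto_slope,
        diff_singleton_eq_self (fun hc => lt_irrefl t hc.1)]
      have hbound : ∀ y ∈ Ioo t 1, g y ≤ slope Gf t y ∧ slope Gf t y ≤ R t := by
        intro y hy
        have hty : t < y := hy.1
        have hy1 : y ≤ 1 := hy.2.le
        have hioc : Ioc t y ⊆ Ioc (0:ℝ) 1 := fun z hz =>
          ⟨lt_trans ht0 hz.1, le_trans hz.2 hy1⟩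
        have hdiff : Gf y - Gf t = ∫ u in Ioc t y, g u := hGsplit t y ht0.le hty.le hy1
        have hslope : slope Gf t y = (∫ u in Ioc t y, g u) / (y - t) := by
          rw [slope_def_field, hdiff]
        have hvol : (volume (Ioc t y)).toReal = y - t := by
          rw [Real.volume_Ioc, ENNReal.toReal_ofReal (by linarith)]
        constructor
        · rw [hslope, le_div_iff₀ (by linarith)]
          have hmon : ∫ _ in Ioc t y, g y ≤ ∫ u in Ioc t y, g u := by
            apply setIntegral_mono_on (integrableOn_const measure_Ioc_lt_top.ne)
              (hgInt.mono_set hioc) measurableSet_Ioc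
            intro u hu
            exact hg_anti (hioc hu) (hmem01 y (lt_trans ht.1 hty) hy1) hu.2
          rw [setIntegral_const, measureReal_def, hvol, smul_eq_mul] at hmon
          linarith [hmon]
        · rw [hslope, div_le_iff₀ (by linarith)]
          have hmon : ∫ u in Ioc t y, g u ≤ ∫ _ in Ioc t y, R t := by
            apply setIntegral_mono_on (hgInt.mono_set hioc)
              (integrableOn_const measure_Ioc_lt_top.ne) measurableSet_Ioc
            intro u hu
            exact hg_le_R t u ht.1.le hu.1 (le_trans hu.2 hy1)
          rw [setIntegral_const, measureReal_def, hvol, smul_eq_mul] at hmon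
          linarith [hmon]
      have htend : Tendsto g (𝓝[Ioo t 1] t) (𝓝 (R t)) := by
        rw [tendsto_order]
        constructor
        · intro b hb
          have hne : (g '' Ioc (max t ε) 1).Nonempty := by
            rw [hmax t ht.1.le]
            exact (nonempty_Ioc.2 ht.2).image g
          obtain ⟨y, hymem, hby⟩ := exists_lt_of_lt_csSup hne hb
          obtain ⟨s, hs, rfl⟩ := hymem
          rw [hmax t ht.1.le] at hs
          have hIio : Iio s ∈ 𝓝[Ioo t 1] t := mem_nhdsWithin_of_mem_nhds (Iio_mem_nhds hs.1)
          filter_upwards [hIio, self_mem_nhdsWithin] with y hy1 hy2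
          exact lt_of_lt_of_le hby
            (hg_anti (hmem01 y (lt_trans ht.1 hy2.1) hy2.2.le)
              (hmem01 s (lt_trans ht.1 hs.1) hs.2) (le_of_lt hy1))
        · intro b hb
          filter_upwards [self_mem_nhdsWithin] with y hy
          exact lt_of_le_of_lt (hg_le_R t y ht.1.le hy.1 hy.2.le) hb
      apply tendsto_of_tendsto_of_tendsto_of_le_of_le' htend tendsto_const_nhds
      · filter_upwards [self_mem_nhdsWithin] with y hy using (hbound y hy).1
      · filter_upwards [self_mem_nhdsWithin] with y hy using (hbound y hy).2
    set Φ : ℝ → ℝ := fun t => Gf t ^ p * t ^ (1 - p) with hΦdef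
    set Φ' : ℝ → ℝ := fun t =>
        R t * p * Gf t ^ (p - 1) * t ^ (1 - p) + Gf t ^ p * ((1 - p) * t ^ (1 - p - 1)) with hΦ'def
    have hΦderiv : ∀ t ∈ Ioo ε 1, HasDerivWithinAt Φ (Φ' t) (Ioi t) t := by
      intro t ht
      have ht0 : 0 < t := lt_trans hε0 ht.1
      have h1 := (hGderiv t ht).rpow_const (p := p) (Or.inr hp.le)
      have h2 : HasDerivWithinAt (fun y : ℝ => y ^ (1 - p)) ((1 - p) * t ^ (1 - p - 1)) (Ioi t) t :=
        (Real.hasDerivAt_rpow_const (Or.inl ht0.ne')).hasDerivWithinAt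
      exact h1.mul h2
    have hcontΦ : ContinuousOn Φ (Icc ε 1) := by
      apply ContinuousOn.mul
      · exact (hGcont.mono (Icc_subset_Icc hε0.le le_rfl)).rpow_const (fun x _ => Or.inr hp0.le)
      · exact ContinuousOn.rpow_const continuousOn_id
          (fun x hx => Or.inl (ne_of_gt (lt_of_lt_of_le hε0 hx.1)))
    have hGaesm : AEStronglyMeasurable Gf (volume.restrict (Ioc ε 1)) :=
      (hGcont.mono (fun x hx => ⟨le_trans hε0.le hx.1.le, hx.2⟩)).aestronglyMeasurable
        measurableSet_Ioc
    have hΦ'aesm : AEStronglyMeasurable Φ' (volume.restrict (Ioc ε 1)) := by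
      have hGae := hGaesm.aemeasurable
      have hpow1 : AEMeasurable (fun t => Gf t ^ (p - 1)) (volume.restrict (Ioc ε 1)) :=
        hGae.pow aemeasurable_const
      have hpow2 : AEMeasurable (fun t => Gf t ^ p) (volume.restrict (Ioc ε 1)) :=
        hGae.pow aemeasurable_const
      have hid : AEMeasurable (fun t : ℝ => t ^ (1 - p)) (volume.restrict (Ioc ε 1)) :=
        measurable_id.aemeasurable.pow aemeasurable_const
      have hid2 : AEMeasurable (fun t : ℝ => t ^ (1 - p - 1)) (volume.restrict (Ioc ε 1)) :=
        measurable_id.aemeasurable.pow aemeasurable_const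
      exact ((((hRmeas.aemeasurable.mul_const p).mul hpow1).mul hid).add
        (hpow2.mul (hid2.const_mul (1 - p)))).aestronglyMeasurable
    have hrpow_anti : ∀ c : ℝ, c ≤ 0 → ∀ a b : ℝ, 0 < a → a ≤ b → b ^ c ≤ a ^ c := by
      intro c hc a b ha hab
      have hb : 0 < b := lt_of_lt_of_le ha hab
      have hflip : ∀ x : ℝ, 0 < x → x ^ c = (x ^ (-c))⁻¹ := by
        intro x hx
        rw [← Real.rpow_neg hx.le, neg_neg]
      rw [hflip a ha, hflip b hb]
      exact inv_anti₀ (Real.rpow_pos_of_pos ha _)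
        (Real.rpow_le_rpow ha.le hab (by linarith))
    have hΦ'int : IntervalIntegrable Φ' volume ε 1 := by
      rw [intervalIntegrable_iff_integrableOn_Ioc_of_le hε1.le]
      apply Integrable.mono'
        (g := fun _ => g ε * p * f ^ (p - 1) * ε ^ (1 - p) + f ^ p * ((p - 1) * ε ^ (1 - p - 1)))
        (integrableOn_const measure_Ioc_lt_top.ne) hΦ'aesm
      refine (ae_restrict_iff' measurableSet_Ioc).2 (ae_of_all _ ?_)
      intro t ht
      have ht0 : 0 < t := lt_trans hε0 ht.1
      have hGf0 : 0 ≤ Gf t := hGnn t ht.2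
      have hGfle : Gf t ≤ f := hGle t ⟨ht0.le, ht.2⟩
      have hb1 : Gf t ^ (p - 1) ≤ f ^ (p - 1) := Real.rpow_le_rpow hGf0 hGfle hp1.le
      have hb2 : Gf t ^ p ≤ f ^ p := Real.rpow_le_rpow hGf0 hGfle hp0.le
      have hb3 : t ^ (1 - p) ≤ ε ^ (1 - p) := hrpow_anti _ (by linarith) ε t hε0 ht.1.le
      have hb4 : t ^ (1 - p - 1) ≤ ε ^ (1 - p - 1) := hrpow_anti _ (by linarith) ε t hε0 ht.1.le
      have hRt0 := hRnn t
      have hRtle := hRleε t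
      have tp0 : 0 ≤ t ^ (1 - p) := Real.rpow_nonneg ht0.le _
      have tp0' : 0 ≤ t ^ (1 - p - 1) := Real.rpow_nonneg ht0.le _
      have hGp0 : 0 ≤ Gf t ^ (p - 1) := Real.rpow_nonneg hGf0 _
      have hGpp0 : 0 ≤ Gf t ^ p := Real.rpow_nonneg hGf0 _
      have hfp0 : 0 ≤ f ^ (p - 1) := Real.rpow_nonneg hf.le _
      have hA : R t * p * Gf t ^ (p - 1) * t ^ (1 - p) ≤ g ε * p * f ^ (p - 1) * ε ^ (1 - p) := by
        have h1 : R t * p ≤ g ε * p := mul_le_mul_of_nonneg_right hRtle hp0.le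
        have h2 : R t * p * Gf t ^ (p - 1) ≤ g ε * p * f ^ (p - 1) :=
          mul_le_mul h1 hb1 hGp0 (mul_nonneg hgε0 hp0.le)
        exact mul_le_mul h2 hb3 tp0 (mul_nonneg (mul_nonneg hgε0 hp0.le) hfp0)
      have hA0 : 0 ≤ R t * p * Gf t ^ (p - 1) * t ^ (1 - p) :=
        mul_nonneg (mul_nonneg (mul_nonneg hRt0 hp0.le) hGp0) tp0
      have hB : Gf t ^ p * ((p - 1) * t ^ (1 - p - 1)) ≤ f ^ p * ((p - 1) * ε ^ (1 - p - 1)) :=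
        mul_le_mul hb2 (mul_le_mul_of_nonneg_left hb4 hp1.le)
          (mul_nonneg hp1.le tp0') (Real.rpow_nonneg hf.le _)
      have hB0 : 0 ≤ Gf t ^ p * ((p - 1) * t ^ (1 - p - 1)) :=
        mul_nonneg hGpp0 (mul_nonneg hp1.le tp0')
      rw [Real.norm_eq_abs, hΦ'def]
      simp only
      have e : Gf t ^ p * ((1 - p) * t ^ (1 - p - 1)) =
          -(Gf t ^ p * ((p - 1) * t ^ (1 - p - 1))) := by ring
      rw [e]
      apply abs_le.2
      constructor
      · linarith
      · linarith
    have hFTC : ∫ t in Ioc ε 1, Φ' t = f ^ p - Φ ε := by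
      have h := integral_eq_sub_of_hasDeriv_right_of_le hε1.le hcontΦ hΦderiv hΦ'int
      rw [intervalIntegral.integral_of_le hε1.le] at h
      rw [h, hΦdef]
      simp only
      rw [hGf1, Real.one_rpow, mul_one]
    have hA_eq : EqOn Φ'
        (fun t => p * (((1 / t) * Gf t) ^ (p - 1) * R t) + (1 - p) * ((1 / t) * Gf t) ^ p)
        (Ioc ε 1) := by
      intro t ht
      have ht0 : 0 < t := lt_trans hε0 ht.1
      have hGf0 : 0 ≤ Gf t := hGnn t ht.2
      have h1t : (0:ℝ) ≤ 1 / t := div_nonneg zero_le_one ht0.le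
      have hinv_pow : ∀ c : ℝ, (1 / t) ^ c = t ^ (-c) := by
        intro c
        rw [one_div, Real.inv_rpow ht0.le, ← Real.rpow_neg ht0.le]
      have e1 : ((1 / t) * Gf t) ^ (p - 1) = t ^ (-(p - 1)) * Gf t ^ (p - 1) := by
        rw [Real.mul_rpow h1t hGf0, hinv_pow]
      have e2 : ((1 / t) * Gf t) ^ p = t ^ (-p) * Gf t ^ p := by
        rw [Real.mul_rpow h1t hGf0, hinv_pow]
      have c1 : t ^ (1 - p) = t ^ (-(p - 1)) := by
        congr 1
        ring
      have c2 : t ^ (1 - p - 1) = t ^ (-p) := by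
        congr 1
        ring
      simp only [hΦ'def]
      rw [c1, c2, e1, e2]
      ring
    have hApInt : IntegrableOn (fun t => ((1 / t) * Gf t) ^ p) (Ioc ε 1) :=
      hInt.mono_set (Ioc_subset_Ioc hε0.le le_rfl)
    have hsub : Ioc ε 1 ⊆ Ioc (0:ℝ) 1 := Ioc_subset_Ioc hε0.le le_rfl
    have hAcont : ContinuousOn (fun t => (1 / t) * Gf t) (Ioc ε 1) := by
      apply ContinuousOn.mul
      · exact continuousOn_const.div continuousOn_id
          (fun x hx => ne_of_gt (lt_trans hε0 hx.1))
      · exact hGcont.mono (fun x hx => ⟨le_trans hε0.le hx.1.le, hx.2⟩)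
    have hApRInt : IntegrableOn (fun t => ((1 / t) * Gf t) ^ (p - 1) * R t) (Ioc ε 1) := by
      have haesm : AEStronglyMeasurable (fun t => ((1 / t) * Gf t) ^ (p - 1) * R t)
          (volume.restrict (Ioc ε 1)) :=
        ((hAcont.rpow_const (fun x _ => Or.inr hp1.le)).aestronglyMeasurable
          measurableSet_Ioc).mul hRmeas.aestronglyMeasurable
      apply Integrable.mono' (g := fun _ => ((1 / ε) * f) ^ (p - 1) * g ε)
        (integrableOn_const measure_Ioc_lt_top.ne) haesm
      refine (ae_restrict_iff' measurableSet_Ioc).2 (ae_of_all _ ?_)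
      intro t ht
      have ht0 : 0 < t := lt_trans hε0 ht.1
      have hGf0 : 0 ≤ Gf t := hGnn t ht.2
      have hA0 : 0 ≤ (1 / t) * Gf t := mul_nonneg (div_nonneg zero_le_one ht0.le) hGf0
      have hAle : (1 / t) * Gf t ≤ (1 / ε) * f :=
        mul_le_mul (one_div_le_one_div_of_le hε0 ht.1.le) (hGle t ⟨ht0.le, ht.2⟩) hGf0
          (div_nonneg zero_le_one hε0.le)
      rw [Real.norm_eq_abs, abs_of_nonneg (mul_nonneg (Real.rpow_nonneg hA0 _) (hRnn t))]
      exact mul_le_mul (Real.rpow_le_rpow hA0 hAle hp1.le) (hRleε t) (hRnn t)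
        (Real.rpow_nonneg (mul_nonneg (div_nonneg zero_le_one hε0.le) hf.le) _)
    have hsplit2 : ∫ t in Ioc ε 1, Φ' t =
        p * (∫ t in Ioc ε 1, ((1 / t) * Gf t) ^ (p - 1) * R t) +
          (1 - p) * (∫ t in Ioc ε 1, ((1 / t) * Gf t) ^ p) := by
      rw [setIntegral_congr_fun measurableSet_Ioc hA_eq,
        integral_add (hApRInt.const_mul p) (hApInt.const_mul (1 - p)),
        MeasureTheory.integral_const_mul, MeasureTheory.integral_const_mul]
    have hRg : ∫ t in Ioc ε 1, ((1 / t) * Gf t) ^ (p - 1) * R t =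
        ∫ t in Ioc ε 1, ((1 / t) * Gf t) ^ (p - 1) * g t := by
      apply MeasureTheory.integral_congr_ae
      have hD : {t | t ∈ Ioo ε 1 ∧ R t < g t}.Countable := by
        apply Set.PairwiseDisjoint.countable_of_isOpen (s := fun t => Ioo (R t) (g t))
        · intro a ha b hb hab
          wlog hlt : a < b generalizing a b
          · exact (this hb ha (Ne.symm hab)
              (lt_of_le_of_ne (not_lt.1 hlt) (Ne.symm hab))).symm
          have hgb : g b ≤ R a := hg_le_R a b ha.1.1.le hlt hb.1.2.le
          refine Set.disjoint_left.2 ?_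
          rintro x hx hx2
          have h1 : R a < x := hx.1
          have h2 : x < g b := hx2.2
          linarith
        · exact fun x _ => isOpen_Ioo
        · exact fun x hx => nonempty_Ioo.2 hx.2
      have hnull : volume ({t | t ∈ Ioo ε 1 ∧ R t < g t} ∪ {1}) = 0 :=
        measure_union_null (hD.measure_zero _) (measure_singleton 1)
      have hae : ∀ᵐ t ∂(volume.restrict (Ioc ε 1)),
          t ∉ ({t | t ∈ Ioo ε 1 ∧ R t < g t} ∪ {1} : Set ℝ) :=
        ae_restrict_of_ae (measure_eq_zero_iff_ae_notMem.1 hnull)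
      filter_upwards [hae, ae_restrict_mem measurableSet_Ioc] with t htn htm
      have ht1 : t ≠ 1 := fun hc => htn (Or.inr (by simp [hc]))
      have htIoo : t ∈ Ioo ε 1 := ⟨htm.1, lt_of_le_of_ne htm.2 ht1⟩
      have hnlt : ¬ (R t < g t) := fun hc => htn (Or.inl ⟨htIoo, hc⟩)
      have hReq : R t = g t := le_antisymm (hRle_g t htIoo) (not_lt.1 hnlt)
      rw [hReq]
    have hI2 : ∫ t in Ioc ε 1, ((1 / t) * Gf t) ^ (p - 1) * g t ≤ S ^ (1/q) * F ^ (1/p) := by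
      have hAq : EqOn (fun t => ((1 / t) * Gf t) ^ p)
          (fun t => (((1 / t) * Gf t) ^ (p - 1)) ^ q) (Ioc ε 1) := by
        intro t ht
        have ht0 : 0 < t := lt_trans hε0 ht.1
        have hA0 : 0 ≤ (1 / t) * Gf t :=
          mul_nonneg (div_nonneg zero_le_one ht0.le) (hGnn t ht.2)
        simp only
        rw [← Real.rpow_mul hA0]
        congr 1
        rw [hqdef]
        field_simp
      have h := holder_set measurableSet_Ioc hpq.symm
        (u := fun t => ((1 / t) * Gf t) ^ (p - 1)) (v := g)
        (fun x hx => Real.rpow_nonneg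
          (mul_nonneg (div_nonneg zero_le_one (lt_trans hε0 hx.1).le) (hGnn x hx.2)) _)
        (fun x hx => hg_nonneg x (hsub hx))
        (hApInt.congr_fun hAq measurableSet_Ioc)
        (hg_p.mono_set hsub)
      rw [← setIntegral_congr_fun measurableSet_Ioc hAq] at h
      have hi1 : 0 ≤ ∫ t in Ioc ε 1, ((1 / t) * Gf t) ^ p :=
        setIntegral_nonneg measurableSet_Ioc
          (fun x hx => Real.rpow_nonneg
            (mul_nonneg (div_nonneg zero_le_one (lt_trans hε0 hx.1).le) (hGnn x hx.2)) _)
      have hi2 : 0 ≤ ∫ t in Ioc ε 1, g t ^ p :=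
        setIntegral_nonneg measurableSet_Ioc
          (fun x hx => Real.rpow_nonneg (hg_nonneg x (hsub hx)) _)
      have hb1 : ∫ t in Ioc ε 1, ((1 / t) * Gf t) ^ p ≤ S := by
        rw [hS]
        apply setIntegral_mono_set hInt
        · exact (ae_restrict_iff' measurableSet_Ioc).2 (ae_of_all _
            (fun x hx => Real.rpow_nonneg
              (mul_nonneg (div_nonneg zero_le_one hx.1.le) (hGnn x hx.2)) _))
        · exact HasSubset.Subset.eventuallyLE hsub
      have hb2 : ∫ t in Ioc ε 1, g t ^ p ≤ F := by
        rw [← hgF]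
        apply setIntegral_mono_set hg_p
        · exact (ae_restrict_iff' measurableSet_Ioc).2 (ae_of_all _
            (fun x hx => Real.rpow_nonneg (hg_nonneg x hx) _))
        · exact HasSubset.Subset.eventuallyLE hsub
      calc ∫ t in Ioc ε 1, ((1 / t) * Gf t) ^ (p - 1) * g t
          ≤ (∫ t in Ioc ε 1, ((1 / t) * Gf t) ^ p) ^ (1/q) *
              (∫ t in Ioc ε 1, g t ^ p) ^ (1/p) := h
        _ ≤ S ^ (1/q) * F ^ (1/p) :=
            mul_le_mul (Real.rpow_le_rpow hi1 hb1 (one_div_nonneg.2 hq0.le))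
              (Real.rpow_le_rpow hi2 hb2 (one_div_nonneg.2 hp0.le))
              (Real.rpow_nonneg hi2 _) (Real.rpow_nonneg (le_trans hi1 hb1) _)
    have hFsplit : (∫ u in Ioc (0:ℝ) ε, g u ^ p) + (∫ t in Ioc ε 1, g t ^ p) = F := by
      rw [← hgF, ← setIntegral_union (Ioc_disjoint_Ioc_of_le le_rfl) measurableSet_Ioc
        (hg_p.mono_set (Ioc_subset_Ioc le_rfl hε1.le))
        (hg_p.mono_set (fun x hx => ⟨lt_trans hε0 hx.1, hx.2⟩)),
        Ioc_union_Ioc_eq_Ioc hε0.le hε1.le]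
    have hΦε : Φ ε ≤ F - ∫ t in Ioc ε 1, g t ^ p := by
      have h := hΦbound ε hε0 hε1.le
      have he : Φ ε = Gf ε ^ p * ε ^ (1 - p) := rfl
      linarith
    have hky := hFTC
    rw [hsplit2, hRg] at hky
    linarith [mul_le_mul_of_nonneg_left hI2 hp0.le, hΦε, hky]


  set sn : ℕ → Set ℝ := fun n => Ioc ((1:ℝ)/(n+2)) 1 with hsn
  have hsm : ∀ n, MeasurableSet (sn n) := fun n => measurableSet_Ioc
  have hmono : Monotone sn := by
    intro a b hab
    apply Ioc_subset_Ioc _ le_rfl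
    apply one_div_le_one_div_of_le (by positivity)
    have h : (a:ℝ) ≤ b := Nat.cast_le.2 hab
    linarith
  have hU : ⋃ n, sn n = Ioc (0:ℝ) 1 := by
    ext t
    simp only [hsn, mem_iUnion, mem_Ioc]
    constructor
    · rintro ⟨n, h1, h2⟩
      exact ⟨lt_trans (by positivity) h1, h2⟩
    · rintro ⟨h1, h2⟩
      obtain ⟨n, hn⟩ := exists_nat_one_div_lt h1
      refine ⟨n, lt_of_le_of_lt ?_ hn, h2⟩
      apply one_div_le_one_div_of_le (by positivity)
      push_cast
      linarith
  have hT1 : Tendsto (fun n => ∫ t in sn n, ((1 / t) * Gf t) ^ p) atTop (𝓝 S) := by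
    have h := tendsto_setIntegral_of_monotone hsm hmono (by rw [hU]; exact hInt)
    rwa [hU] at h
  have hT2 : Tendsto (fun n => ∫ t in sn n, g t ^ p) atTop (𝓝 F) := by
    have h := tendsto_setIntegral_of_monotone hsm hmono (by rw [hU]; exact hg_p)
    rw [hU, hgF] at h
    exact h
  have hlim : (p-1) * S + f ^ p ≤ p * (S ^ (1/q) * F ^ (1/p)) := by
    have hL : Tendsto (fun n => (p-1) * (∫ t in sn n, ((1 / t) * Gf t) ^ p) + f ^ p) atTop
        (𝓝 ((p-1) * S + f ^ p)) := (hT1.const_mul _).add tendsto_const_nhds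
    have hR : Tendsto (fun n => p * (S ^ (1/q) * F ^ (1/p)) + (F - ∫ t in sn n, g t ^ p)) atTop
        (𝓝 (p * (S ^ (1/q) * F ^ (1/p)) + (F - F))) :=
      tendsto_const_nhds.add (tendsto_const_nhds.sub hT2)
    have hle := le_of_tendsto_of_tendsto' hL hR (fun n => by
      apply key
      · positivity
      · rw [div_lt_one (by positivity)]
        push_cast
        linarith [Nat.cast_nonneg (α := ℝ) n])
    simpa using hle
  exact scalar_step hp hqdef hF hw1 hweq hlim
end

section
/- Let (X, μ) be a non-atomic probability space with tree 𝒯 and maximal operator M_𝒯. Let φ : X → ℝ≥0 be integrable with non-increasing rearrangement φ*, and let G : [0,∞) → [0,∞) be non-decreasing. Then ∫_X G(M_𝒯 φ) dμ ≤ ∫_0^1 G( t^{-1} ∫_0^t φ*(u) du ) dt. -/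
open MeasureTheory Set

/-- A tree structure on a probability space, as in the paper: a system of measurable
sets of positive measure, organized in generations, each set split into at least two
pairwise disjoint children, with generation measures shrinking to zero. -/
structure MTree (X : Type*) [MeasurableSpace X] (μ : Measure X) where
  C : Set X → Set (Set X)
  gen : ℕ → Set (Set X)
  gen_zero : gen 0 = {Set.univ}
  gen_succ : ∀ m, gen (m + 1) = ⋃ I ∈ gen m, C I
  meas : ∀ I ∈ ⋃ m, gen m, MeasurableSet I
  pos : ∀ I ∈ ⋃ m, gen m, 0 < μ I
  child_countable : ∀ I ∈ ⋃ m, gen m, (C I).Countable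
  child_nontrivial : ∀ I ∈ ⋃ m, gen m, (C I).Nontrivial
  child_sub : ∀ I ∈ ⋃ m, gen m, ∀ J ∈ C I, J ⊆ I
  child_disj : ∀ I ∈ ⋃ m, gen m, (C I).PairwiseDisjoint id
  child_union : ∀ I ∈ ⋃ m, gen m, ⋃₀ C I = I
  shrink : Filter.Tendsto (fun m => ⨆ I ∈ gen m, μ I) Filter.atTop (nhds 0)

/-- The collection of all sets of the tree. -/
def MTree.sets {X : Type*} [MeasurableSpace X] {μ : Measure X} (T : MTree X μ) :
    Set (Set X) := ⋃ m, T.gen m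

/-- The maximal operator associated to a tree:
`M_T φ x = sup { μ(I)⁻¹ ∫_I |φ| dμ : x ∈ I ∈ T }`. -/
noncomputable def MTree.maximal {X : Type*} [MeasurableSpace X] {μ : Measure X}
    (T : MTree X μ) (φ : X → ℝ) (x : X) : ℝ :=
  sSup {r : ℝ | ∃ I ∈ T.sets, x ∈ I ∧ r = (∫ u in I, |φ u| ∂μ) / (μ I).toReal}

namespace MTree

variable {X : Type*} [MeasurableSpace X] {μ : Measure X} (T : MTree X μ)

lemma gen_subset_sets (m : ℕ) : T.gen m ⊆ T.sets := subset_iUnion T.gen m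

lemma mem_sets_iff {I : Set X} : I ∈ T.sets ↔ ∃ m, I ∈ T.gen m := Set.mem_iUnion

lemma univ_mem_sets : Set.univ ∈ T.sets :=
  T.mem_sets_iff.2 ⟨0, by rw [T.gen_zero]; exact rfl⟩

lemma sets_countable : T.sets.Countable := by
  have h : ∀ m, (T.gen m).Countable := by
    intro m; induction m with
    | zero => rw [T.gen_zero]; exact Set.countable_singleton _
    | succ m ih =>
      rw [T.gen_succ]
      exact ih.biUnion fun I hI => T.child_countable I (T.gen_subset_sets m hI)
  exact Set.countable_iUnion h

lemma exists_parent {m : ℕ} {I : Set X} (hI : I ∈ T.gen (m + 1)) :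
    ∃ J ∈ T.gen m, I ⊆ J := by
  rw [T.gen_succ] at hI
  simp only [Set.mem_iUnion] at hI
  obtain ⟨J, hJ, hIJ⟩ := hI
  exact ⟨J, hJ, T.child_sub J (T.gen_subset_sets m hJ) I hIJ⟩

lemma exists_ancestor : ∀ {n m : ℕ}, m ≤ n → ∀ {I : Set X}, I ∈ T.gen n →
    ∃ J ∈ T.gen m, I ⊆ J := by
  intro n
  induction n with
  | zero => intro m hm I hI; exact ⟨I, by simpa [Nat.le_zero.1 hm] using hI, subset_rfl⟩
  | succ n ih =>
    intro m hm I hI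
    rcases Nat.lt_or_ge m (n + 1) with h | h
    · obtain ⟨J, hJ, hIJ⟩ := T.exists_parent hI
      obtain ⟨K, hK, hJK⟩ := ih (Nat.lt_succ_iff.1 h) hJ
      exact ⟨K, hK, hIJ.trans hJK⟩
    · exact ⟨I, by rwa [le_antisymm hm h], subset_rfl⟩

lemma gen_pairwiseDisjoint (m : ℕ) : (T.gen m).PairwiseDisjoint id := by
  induction m with
  | zero => rw [T.gen_zero]; exact Set.pairwiseDisjoint_singleton _ _
  | succ m ih =>
    intro I₁ h₁ I₂ h₂ hne
    rw [T.gen_succ] at h₁ h₂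
    simp only [Set.mem_iUnion] at h₁ h₂
    obtain ⟨J₁, hJ₁, hI₁⟩ := h₁
    obtain ⟨J₂, hJ₂, hI₂⟩ := h₂
    by_cases hJ : J₁ = J₂
    · subst hJ
      exact T.child_disj J₁ (T.gen_subset_sets m hJ₁) hI₁ hI₂ hne
    · have hd : Disjoint J₁ J₂ := ih hJ₁ hJ₂ hJ
      exact hd.mono (T.child_sub J₁ (T.gen_subset_sets m hJ₁) I₁ hI₁)
        (T.child_sub J₂ (T.gen_subset_sets m hJ₂) I₂ hI₂)

lemma nested_or_disjoint {m n : ℕ} (hmn : m ≤ n) {I J : Set X}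
    (hI : I ∈ T.gen m) (hJ : J ∈ T.gen n) : J ⊆ I ∨ Disjoint I J := by
  obtain ⟨K, hK, hJK⟩ := T.exists_ancestor hmn hJ
  by_cases h : K = I
  · exact Or.inl (h ▸ hJK)
  · exact Or.inr ((T.gen_pairwiseDisjoint m hI hK (Ne.symm h)).mono_right hJK)

lemma exists_maximal (hne : ∀ I ∈ T.sets, (I : Set X).Nonempty)
    (A : Set X → ℝ) (lam : ℝ) (h0 : A Set.univ ≤ lam) :
    ∀ n, ∀ I ∈ T.gen n, lam < A I →
      ∃ K ∈ T.sets, I ⊆ K ∧ lam < A K ∧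
        ∀ L ∈ T.sets, K ⊆ L → lam < A L → L = K := by
  intro n
  induction n using Nat.strong_induction_on with
  | _ n ih =>
    intro I hI hAI
    match n, hI, ih with
    | 0, hI, _ => 
      rw [T.gen_zero] at hI
      rw [Set.mem_singleton_iff.1 hI] at hAI
      exact absurd hAI (not_lt.2 h0)
    | (n+1), hI, ih =>
      by_cases hex : ∃ i ≤ n, ∃ L ∈ T.gen i, I ⊆ L ∧ lam < A L
      · obtain ⟨i, hi, L, hL, hIL, hAL⟩ := hex
        obtain ⟨K, hK, hLK, hAK, hmax⟩ := ih i (Nat.lt_succ_of_le hi) L hL hAL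
        exact ⟨K, hK, hIL.trans hLK, hAK, hmax⟩
      · refine ⟨I, T.gen_subset_sets _ hI, subset_rfl, hAI, ?_⟩
        intro L hL hIL hAL
        obtain ⟨i, hLi⟩ := T.mem_sets_iff.1 hL
        rcases Nat.lt_or_ge n i with h | h
        · -- n + 1 ≤ i
          rcases T.nested_or_disjoint h hI hLi with hsub | hd
          · exact subset_antisymm hsub hIL
          · exact absurd (hd.mono_right hIL)
              (fun hdd => (hne I (T.gen_subset_sets _ hI)).ne_empty
                (by simpa using disjoint_self.1 hdd))
        · exact absurd ⟨i, h, L, hLi, hIL, hAL⟩ hex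

end MTree

lemma real_iSup_eq_toReal (g : ℕ → ℝ) (hg : ∀ n, 0 ≤ g n) :
    (⨆ n, g n) = (⨆ n, ENNReal.ofReal (g n)).toReal := by
  by_cases hb : BddAbove (Set.range g)
  · have h2 : (⨆ n, ENNReal.ofReal (g n)) ≤ ENNReal.ofReal (⨆ n, g n) :=
      iSup_le fun n => ENNReal.ofReal_le_ofReal (le_ciSup hb n)
    have hfin : (⨆ n, ENNReal.ofReal (g n)) ≠ ⊤ :=
      ne_top_of_le_ne_top ENNReal.ofReal_ne_top h2
    refine le_antisymm (ciSup_le fun n => ?_) ?_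
    · calc g n = (ENNReal.ofReal (g n)).toReal := (ENNReal.toReal_ofReal (hg n)).symm
        _ ≤ _ := ENNReal.toReal_mono hfin (le_iSup (fun n => ENNReal.ofReal (g n)) n)
    · calc (⨆ n, ENNReal.ofReal (g n)).toReal
          ≤ (ENNReal.ofReal (⨆ n, g n)).toReal :=
            ENNReal.toReal_mono ENNReal.ofReal_ne_top h2
        _ = ⨆ n, g n := ENNReal.toReal_ofReal (le_trans (hg 0) (le_ciSup hb 0))
  · rw [Real.iSup_of_not_bddAbove hb]
    have htop : (⨆ n, ENNReal.ofReal (g n)) = ⊤ := by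
      by_contra h
      apply hb
      refine ⟨(⨆ n, ENNReal.ofReal (g n)).toReal, ?_⟩
      rintro r ⟨n, rfl⟩
      calc g n = (ENNReal.ofReal (g n)).toReal := (ENNReal.toReal_ofReal (hg n)).symm
        _ ≤ _ := ENNReal.toReal_mono h (le_iSup (fun n => ENNReal.ofReal (g n)) n)
    rw [htop, ENNReal.toReal_top]

lemma MTree.maximal_measurable {X : Type*} [MeasurableSpace X] {μ : Measure X}
    (T : MTree X μ) (φ : X → ℝ) : Measurable (T.maximal φ) := by
  classical
  obtain ⟨e, he⟩ := T.sets_countable.exists_eq_range ⟨_, T.univ_mem_sets⟩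
  set a : Set X → ℝ := fun I => (∫ u in I, |φ u| ∂μ) / (μ I).toReal with ha
  have ha_nn : ∀ I, 0 ≤ a I := fun I =>
    div_nonneg (integral_nonneg fun u => abs_nonneg _) ENNReal.toReal_nonneg
  set h : ℕ → X → ℝ := fun n => (e n).piecewise (fun _ => a (e n)) (fun _ => a Set.univ) with hh
  have hen : ∀ n, e n ∈ T.sets := fun n => he ▸ Set.mem_range_self n
  have hset : ∀ x, {r : ℝ | ∃ I ∈ T.sets, x ∈ I ∧ r = a I} = Set.range (fun n => h n x) := by
    intro x
    ext r
    constructor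
    · rintro ⟨I, hI, hxI, rfl⟩
      rw [he] at hI
      obtain ⟨n, rfl⟩ := hI
      exact ⟨n, by simp [hh, Set.piecewise_eq_of_mem _ _ _ hxI]⟩
    · rintro ⟨n, rfl⟩
      by_cases hx : x ∈ e n
      · exact ⟨e n, hen n, hx, by simp [hh, Set.piecewise_eq_of_mem _ _ _ hx]⟩
      · exact ⟨Set.univ, T.univ_mem_sets, Set.mem_univ x,
          by simp [hh, Set.piecewise_eq_of_notMem _ _ _ hx]⟩
  have key : T.maximal φ = fun x => (⨆ n, ENNReal.ofReal (h n x)).toReal := by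
    funext x
    show sSup {r : ℝ | ∃ I ∈ T.sets, x ∈ I ∧ r = a I} = _
    rw [hset x]
    exact real_iSup_eq_toReal (fun n => h n x) (fun n => by
      by_cases hx : x ∈ e n
      · simp [hh, Set.piecewise_eq_of_mem _ _ _ hx, ha_nn]
      · simp [hh, Set.piecewise_eq_of_notMem _ _ _ hx, ha_nn])
  rw [key]
  exact ENNReal.measurable_toReal.comp (Measurable.iSup fun n =>
    ENNReal.measurable_ofReal.comp (Measurable.piecewise (T.meas (e n) (hen n))
      measurable_const measurable_const))

lemma vol_of_sandwich {A : Set ℝ} {c : ℝ} (h1 : Set.Ioo 0 c ⊆ A) (h2 : A ⊆ Set.Ioc 0 c) :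
    volume A = ENNReal.ofReal c := by
  refine le_antisymm ?_ ?_
  · calc volume A ≤ volume (Set.Ioc 0 c) := measure_mono h2
      _ = ENNReal.ofReal c := by simp
  · calc ENNReal.ofReal c = volume (Set.Ioo 0 c) := by simp
      _ ≤ volume A := measure_mono h1

/-- A downward-closed subset of `(0,1]` is sandwiched between `Ioo 0 c` and `Ioc 0 c`. -/
lemma sandwich_vol {S : Set ℝ} (hsub : S ⊆ Set.Ioc 0 1)
    (hdc : ∀ ⦃t⦄, t ∈ S → ∀ ⦃t'⦄, 0 < t' → t' ≤ t → t' ∈ S) :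
    ∃ c, 0 ≤ c ∧ c ≤ 1 ∧ Set.Ioo 0 c ⊆ S ∧ S ⊆ Set.Ioc 0 c ∧
      volume S = ENNReal.ofReal c := by
  have hbdd : BddAbove (insert (0:ℝ) S) := by
    refine ⟨1, ?_⟩
    rintro x (rfl | hx)
    · exact zero_le_one
    · exact (hsub hx).2
  set c := sSup (insert (0:ℝ) S) with hc
  have hc0 : 0 ≤ c := le_csSup hbdd (Set.mem_insert 0 S)
  have hc1 : c ≤ 1 := by
    refine csSup_le ⟨0, Set.mem_insert 0 S⟩ ?_
    rintro x (rfl | hx)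
    · exact zero_le_one
    · exact (hsub hx).2
  have hIoo : Set.Ioo 0 c ⊆ S := by
    intro t ht
    obtain ⟨u, hu, htu⟩ := exists_lt_of_lt_csSup ⟨0, Set.mem_insert 0 S⟩ ht.2
    rcases hu with rfl | hu
    · exact absurd ht.1 (not_lt.2 htu.le)
    · exact hdc hu ht.1 htu.le
  have hIoc : S ⊆ Set.Ioc 0 c := fun t ht =>
    ⟨(hsub ht).1, le_csSup hbdd (Set.mem_insert_of_mem 0 ht)⟩
  exact ⟨c, hc0, hc1, hIoo, hIoc, vol_of_sandwich hIoo hIoc⟩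

/-- Corollary 2.1: `∫_X G(M_T φ) dμ ≤ ∫₀¹ G(t⁻¹ ∫₀ᵗ φ*) dt` for nondecreasing `G ≥ 0`. -/
theorem integral_G_maximal_le
    {X : Type*} [MeasurableSpace X] (μ : Measure X) [IsProbabilityMeasure μ]
    [NullSingletonClass μ] (T : MTree X μ)
    (φ : X → ℝ) (hφ : ∀ x, 0 ≤ φ x) (hint : Integrable φ μ)
    (φs : ℝ → ℝ)
    (hφs_anti : AntitoneOn φs (Set.Ioc 0 1))
    (hφs_nonneg : ∀ t ∈ Set.Ioc (0:ℝ) 1, 0 ≤ φs t)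
    (hφs_left : ∀ t ∈ Set.Ioc (0:ℝ) 1, ContinuousWithinAt φs (Set.Iic t) t)
    (hφs_equi : ∀ y : ℝ, μ {x | y < φ x} = volume {t ∈ Set.Ioc (0:ℝ) 1 | y < φs t})
    (G : ℝ → ℝ) (hG_mono : MonotoneOn G (Set.Ici 0))
    (hG_nonneg : ∀ x : ℝ, 0 ≤ x → 0 ≤ G x) (hG_meas : Measurable G) :
    ∫⁻ x, ENNReal.ofReal (G (T.maximal φ x)) ∂μ ≤
      ∫⁻ t in Set.Ioc (0:ℝ) 1,
        ENNReal.ofReal (G ((1 / t) * ∫ u in Set.Ioc (0:ℝ) t, φs u)) := by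
  classical
  set F : ℝ → ℝ := fun t => (1 / t) * ∫ u in Set.Ioc (0:ℝ) t, φs u with hF_def
  set a : Set X → ℝ := fun I => (∫ u in I, |φ u| ∂μ) / (μ I).toReal with ha_def
  have habs : ∀ s : Set X, ∫ u in s, |φ u| ∂μ = ∫ u in s, φ u ∂μ := fun s =>
    integral_congr_ae (Filter.Eventually.of_forall fun u => abs_of_nonneg (hφ u))
  -- basic facts about tree sets
  have hIfacts : ∀ I ∈ T.sets, 0 < μ I ∧ μ I ≠ ⊤ ∧ MeasurableSet I ∧ I.Nonempty :=
    fun I hI => ⟨T.pos I hI, measure_ne_top μ I, T.meas I hI,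
      nonempty_of_measure_ne_zero (T.pos I hI).ne'⟩
  -- nonnegativity of the maximal function
  have ha_nn : ∀ I, 0 ≤ a I := fun I =>
    div_nonneg (integral_nonneg fun u => abs_nonneg _) ENNReal.toReal_nonneg
  have M_nonneg : ∀ x, 0 ≤ T.maximal φ x := by
    intro x
    have hmem : a Set.univ ∈ {r : ℝ | ∃ I ∈ T.sets, x ∈ I ∧ r = a I} :=
      ⟨Set.univ, T.univ_mem_sets, Set.mem_univ x, rfl⟩
    by_cases hb : BddAbove {r : ℝ | ∃ I ∈ T.sets, x ∈ I ∧ r = a I}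
    · exact le_trans (ha_nn Set.univ) (le_csSup hb hmem)
    · show (0:ℝ) ≤ sSup _
      rw [Real.sSup_of_not_bddAbove hb]
  have M_meas : Measurable (T.maximal φ) := T.maximal_measurable φ
  -- from a strict lower bound on the maximal function, get a tree set with large average
  have exists_gt : ∀ x (lam : ℝ), lam < T.maximal φ x →
      ∃ I ∈ T.sets, x ∈ I ∧ lam < a I := by
    intro x lam h
    by_contra hc
    push_neg at hc
    have hub : ∀ r ∈ {r : ℝ | ∃ I ∈ T.sets, x ∈ I ∧ r = a I}, r ≤ lam := by
      rintro r ⟨I, hI, hxI, rfl⟩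
      exact hc I hI hxI
    have hle : T.maximal φ x ≤ lam :=
      csSup_le ⟨a Set.univ, Set.univ, T.univ_mem_sets, Set.mem_univ x, rfl⟩ hub
    exact absurd h (not_lt.2 hle)
  -- measurability of φs on subintervals
  have φs_aemeas : ∀ s : ℝ, s ≤ 1 →
      AEMeasurable φs (volume.restrict (Set.Ioc 0 s)) := fun s hs =>
    aemeasurable_restrict_of_antitoneOn measurableSet_Ioc
      (hφs_anti.mono (Set.Ioc_subset_Ioc_right hs))
  -- superlevel sets of φs are downward closed; record their structure
  have Sy : ∀ y : ℝ, ∃ c, 0 ≤ c ∧ c ≤ 1 ∧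
      Set.Ioo 0 c ⊆ {t ∈ Set.Ioc (0:ℝ) 1 | y < φs t} ∧
      {t ∈ Set.Ioc (0:ℝ) 1 | y < φs t} ⊆ Set.Ioc 0 c ∧
      volume {t ∈ Set.Ioc (0:ℝ) 1 | y < φs t} = ENNReal.ofReal c := by
    intro y
    refine sandwich_vol (fun t ht => ht.1) ?_
    intro t ht t' h0 hle
    exact ⟨⟨h0, hle.trans ht.1.2⟩,
      lt_of_lt_of_le ht.2 (hφs_anti ⟨h0, hle.trans ht.1.2⟩ ht.1 hle)⟩
  -- equality of total lintegrals (equimeasurability)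
  have lint_eq : ∫⁻ x, ENNReal.ofReal (φ x) ∂μ
      = ∫⁻ t in Set.Ioc (0:ℝ) 1, ENNReal.ofReal (φs t) := by
    rw [lintegral_eq_lintegral_meas_lt μ (Filter.Eventually.of_forall hφ) hint.aemeasurable,
      lintegral_eq_lintegral_meas_lt (volume.restrict (Set.Ioc (0:ℝ) 1))
        ((ae_restrict_iff' measurableSet_Ioc).2 (Filter.Eventually.of_forall hφs_nonneg))
        (φs_aemeas 1 le_rfl)]
    refine setLIntegral_congr_fun measurableSet_Ioi
      (fun y _ => ?_)
    rw [hφs_equi y, Measure.restrict_apply' measurableSet_Ioc]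
    congr 1
    ext t
    exact and_comm
  have lint_top : ∫⁻ x, ENNReal.ofReal (φ x) ∂μ < ⊤ := by
    have := hint.hasFiniteIntegral
    rwa [hasFiniteIntegral_iff_ofReal (Filter.Eventually.of_forall hφ)] at this
  have φs_int : IntegrableOn φs (Set.Ioc 0 1) volume := by
    refine ⟨(φs_aemeas 1 le_rfl).aestronglyMeasurable, ?_⟩
    rw [hasFiniteIntegral_iff_ofReal
      ((ae_restrict_iff' measurableSet_Ioc).2 (Filter.Eventually.of_forall hφs_nonneg))]
    rw [← lint_eq]
    exact lint_top
  -- Hardy-Littlewood:  ∫_E φ ≤ ∫_0^{μ E} φ*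
  have HL : ∀ E : Set X, MeasurableSet E →
      ∫⁻ x in E, ENNReal.ofReal (φ x) ∂μ
        ≤ ∫⁻ t in Set.Ioc (0:ℝ) ((μ E).toReal), ENNReal.ofReal (φs t) := by
    intro E hE
    set s := (μ E).toReal with hs
    have hs1 : s ≤ 1 := by
      have h01 : (μ E) ≤ 1 := prob_le_one
      simpa using ENNReal.toReal_mono ENNReal.one_ne_top h01
    have hμE : μ E = ENNReal.ofReal s := (ENNReal.ofReal_toReal (measure_ne_top μ E)).symm
    rw [lintegral_eq_lintegral_meas_lt (μ.restrict E) (Filter.Eventually.of_forall hφ)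
        hint.aemeasurable.restrict,
      lintegral_eq_lintegral_meas_lt (volume.restrict (Set.Ioc (0:ℝ) s))
        ((ae_restrict_iff' measurableSet_Ioc).2 (Filter.Eventually.of_forall fun t ht =>
          hφs_nonneg t ⟨ht.1, ht.2.trans hs1⟩)) (φs_aemeas s hs1)]
    apply lintegral_mono
    intro y
    show (μ.restrict E) {x | y < φ x} ≤ (volume.restrict (Set.Ioc (0:ℝ) s)) {t | y < φs t}
    rw [Measure.restrict_apply' hE, Measure.restrict_apply' measurableSet_Ioc]
    obtain ⟨c, hc0, hc1, hIoo, hIoc, hvol⟩ := Sy y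
    have hEy : μ ({x | y < φ x} ∩ E) ≤ ENNReal.ofReal (min c s) := by
      rcases le_total c s with h | h
      · rw [min_eq_left h]
        calc μ ({x | y < φ x} ∩ E) ≤ μ {x | y < φ x} := measure_mono Set.inter_subset_left
          _ = ENNReal.ofReal c := by rw [hφs_equi y, hvol]
      · rw [min_eq_right h]
        calc μ ({x | y < φ x} ∩ E) ≤ μ E := measure_mono Set.inter_subset_right
          _ = ENNReal.ofReal s := hμE
    refine hEy.trans ?_
    have hsub2 : Set.Ioo 0 (min c s) ⊆ {t | y < φs t} ∩ Set.Ioc 0 s := by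
      intro t ht
      have htc : t ∈ Set.Ioo 0 c := ⟨ht.1, lt_of_lt_of_le ht.2 (min_le_left _ _)⟩
      exact ⟨(hIoo htc).2, ⟨ht.1, le_of_lt (lt_of_lt_of_le ht.2 (min_le_right _ _))⟩⟩
    calc ENNReal.ofReal (min c s) = volume (Set.Ioo 0 (min c s)) := by simp
      _ ≤ volume ({t | y < φs t} ∩ Set.Ioc 0 s) := measure_mono hsub2
  -- F is nonnegative and antitone on (0,1]
  have F_nonneg : ∀ t ∈ Set.Ioc (0:ℝ) 1, 0 ≤ F t := by
    intro t ht
    refine mul_nonneg (one_div_nonneg.2 ht.1.le) ?_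
    exact setIntegral_nonneg measurableSet_Ioc fun u hu => hφs_nonneg u ⟨hu.1, hu.2.trans ht.2⟩
  have F_anti : AntitoneOn F (Set.Ioc 0 1) := by
    intro t₁ h₁ t₂ h₂ h12
    have ht1 : (0:ℝ) < t₁ := h₁.1
    have ht2 : (0:ℝ) < t₂ := h₂.1
    have hmem1 : Set.Ioc (0:ℝ) t₁ ⊆ Set.Ioc (0:ℝ) 1 := Set.Ioc_subset_Ioc_right h₁.2
    have hint1 : IntegrableOn φs (Set.Ioc 0 t₁) volume := φs_int.mono_set hmem1
    have hint2 : IntegrableOn φs (Set.Ioc t₁ t₂) volume :=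
      φs_int.mono_set (Set.Ioc_subset_Ioc ht1.le h₂.2)
    have hsplit : ∫ u in Set.Ioc (0:ℝ) t₂, φs u
        = (∫ u in Set.Ioc (0:ℝ) t₁, φs u) + ∫ u in Set.Ioc t₁ t₂, φs u := by
      rw [← setIntegral_union (Set.Ioc_disjoint_Ioc_of_le le_rfl) measurableSet_Ioc hint1 hint2,
        Set.Ioc_union_Ioc_eq_Ioc ht1.le h12]
    have hup : ∫ u in Set.Ioc t₁ t₂, φs u ≤ (t₂ - t₁) * φs t₁ := by
      have hm : ∫ u in Set.Ioc t₁ t₂, φs u ≤ ∫ _u in Set.Ioc t₁ t₂, φs t₁ := by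
        refine setIntegral_mono_on hint2 (integrableOn_const ?_) measurableSet_Ioc ?_
        · rw [Real.volume_Ioc]; exact ENNReal.ofReal_ne_top
        · intro u hu
          exact hφs_anti ⟨ht1, h₁.2⟩ ⟨ht1.trans hu.1, hu.2.trans h₂.2⟩ hu.1.le
      have hconst : (∫ _u in Set.Ioc t₁ t₂, φs t₁) = (t₂ - t₁) * φs t₁ := by
        rw [setIntegral_const, Real.volume_real_Ioc_of_le h12,
          smul_eq_mul]
      linarith
    have hlow : t₁ * φs t₁ ≤ ∫ u in Set.Ioc (0:ℝ) t₁, φs u := by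
      have hm : ∫ _u in Set.Ioc (0:ℝ) t₁, φs t₁ ≤ ∫ u in Set.Ioc (0:ℝ) t₁, φs u := by
        refine setIntegral_mono_on (integrableOn_const ?_) hint1 measurableSet_Ioc ?_
        · rw [Real.volume_Ioc]; exact ENNReal.ofReal_ne_top
        · intro u hu
          exact hφs_anti ⟨hu.1, hu.2.trans h₁.2⟩ h₁ hu.2
      have hconst : (∫ _u in Set.Ioc (0:ℝ) t₁, φs t₁) = t₁ * φs t₁ := by
        rw [setIntegral_const, Real.volume_real_Ioc_of_le ht1.le, sub_zero,
          smul_eq_mul]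
      linarith
    have hkey : t₁ * (∫ u in Set.Ioc (0:ℝ) t₂, φs u) ≤ t₂ * ∫ u in Set.Ioc (0:ℝ) t₁, φs u := by
      rw [hsplit]
      nlinarith [mul_le_mul_of_nonneg_left hup ht1.le,
        mul_le_mul_of_nonneg_left hlow (sub_nonneg.2 h12)]
    show (1 / t₂) * ∫ u in Set.Ioc (0:ℝ) t₂, φs u ≤ (1 / t₁) * ∫ u in Set.Ioc (0:ℝ) t₁, φs u
    rw [one_div_mul_eq_div, one_div_mul_eq_div, div_le_div_iff₀ ht2 ht1]
    nlinarith [hkey]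
  -- F dominates the mean of φ
  have intφ_eq : (∫ x, φ x ∂μ) = ∫ u in Set.Ioc (0:ℝ) 1, φs u := by
    rw [integral_eq_lintegral_of_nonneg_ae (Filter.Eventually.of_forall hφ)
        hint.aestronglyMeasurable,
      integral_eq_lintegral_of_nonneg_ae
        ((ae_restrict_iff' measurableSet_Ioc).2 (Filter.Eventually.of_forall hφs_nonneg))
        φs_int.aestronglyMeasurable, lint_eq]
  have F_ge : ∀ t ∈ Set.Ioc (0:ℝ) 1, (∫ x, φ x ∂μ) ≤ F t := by
    intro t ht
    have h1 : F 1 = ∫ u in Set.Ioc (0:ℝ) 1, φs u := by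
      show (1 / (1:ℝ)) * _ = _
      rw [div_self one_ne_zero, one_mul]
    calc (∫ x, φ x ∂μ) = ∫ u in Set.Ioc (0:ℝ) 1, φs u := intφ_eq
      _ = F 1 := h1.symm
      _ ≤ F t := F_anti ht ⟨zero_lt_one, le_rfl⟩ ht.2
  -- the core weak-type estimate
  have core : ∀ lam : ℝ, 0 ≤ lam →
      μ {x | lam < T.maximal φ x} ≤ volume {t ∈ Set.Ioc (0:ℝ) 1 | lam ≤ F t} := by
    intro lam hlam
    rcases lt_or_ge lam (∫ x, φ x ∂μ) with hcase | hcase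
    · have hall : {t ∈ Set.Ioc (0:ℝ) 1 | lam ≤ F t} = Set.Ioc (0:ℝ) 1 := by
        ext t
        exact ⟨fun h => h.1, fun h => ⟨h, le_trans hcase.le (F_ge t h)⟩⟩
      rw [hall]
      have hv1 : volume (Set.Ioc (0:ℝ) 1) = 1 := by simp
      rw [hv1]
      exact prob_le_one
    · have hauniv : a Set.univ ≤ lam := by
        have h4 : a Set.univ = ∫ x, φ x ∂μ := by
          show (∫ u in Set.univ, |φ u| ∂μ) / (μ Set.univ).toReal = _
          rw [habs Set.univ, measure_univ, setIntegral_univ]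
          simp
        linarith
      set M : Set (Set X) := {K | K ∈ T.sets ∧ lam < a K ∧
        ∀ L ∈ T.sets, K ⊆ L → lam < a L → L = K} with hM
      have hMsub : M ⊆ T.sets := fun K hK => hK.1
      have hMcnt : M.Countable := T.sets_countable.mono hMsub
      have hMdisj : M.PairwiseDisjoint id := by
        intro K₁ h₁ K₂ h₂ hne
        obtain ⟨m₁, hK₁⟩ := T.mem_sets_iff.1 h₁.1
        obtain ⟨m₂, hK₂⟩ := T.mem_sets_iff.1 h₂.1
        rcases le_total m₁ m₂ with h | h
        · rcases T.nested_or_disjoint h hK₁ hK₂ with hsub | hd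
          · exact absurd (h₂.2.2 K₁ h₁.1 hsub h₁.2.1) hne
          · exact hd
        · rcases T.nested_or_disjoint h hK₂ hK₁ with hsub | hd
          · exact absurd (h₁.2.2 K₂ h₂.1 hsub h₂.2.1) hne.symm
          · exact hd.symm
      have hcover : {x | lam < T.maximal φ x} ⊆ ⋃₀ M := by
        intro x hx
        obtain ⟨I, hI, hxI, haI⟩ := exists_gt x lam hx
        obtain ⟨n, hIn⟩ := T.mem_sets_iff.1 hI
        obtain ⟨K, hK, hIK, haK, hmax⟩ := T.exists_maximal
          (fun I hI => (hIfacts I hI).2.2.2) a lam hauniv n I hIn haI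
        exact ⟨K, ⟨hK, haK, hmax⟩, hIK hxI⟩
      have hMmeasK : ∀ K ∈ M, MeasurableSet K := fun K hK => (hIfacts K (hMsub hK)).2.2.1
      have hμM : μ (⋃₀ M) = ∑' K : M, μ K := measure_sUnion hMcnt hMdisj hMmeasK
      haveI hcntM : Countable M := hMcnt.to_subtype
      have hlM : ∫⁻ x in ⋃₀ M, ENNReal.ofReal (φ x) ∂μ
          = ∑' K : M, ∫⁻ x in (K : Set X), ENNReal.ofReal (φ x) ∂μ := by
        rw [Set.sUnion_eq_iUnion]
        exact lintegral_iUnion (fun K : M => hMmeasK K.1 K.2)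
          (fun i j hij => hMdisj i.2 j.2 (fun h => hij (Subtype.ext h))) _
      have hper : ∀ K : M, ENNReal.ofReal lam * μ K
          ≤ ∫⁻ x in (K : Set X), ENNReal.ofReal (φ x) ∂μ := by
        intro K
        have hμK := hIfacts K.1 (hMsub K.2)
        have hpos : 0 < (μ (K : Set X)).toReal := ENNReal.toReal_pos hμK.1.ne' hμK.2.1
        have h1 : lam * (μ (K : Set X)).toReal ≤ ∫ x in (K : Set X), φ x ∂μ := by
          have h2 := K.2.2.1
          rw [ha_def] at h2
          dsimp at h2
          rw [habs (K : Set X)] at h2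
          exact le_of_lt ((lt_div_iff₀ hpos).1 h2)
        calc ENNReal.ofReal lam * μ (K : Set X)
            = ENNReal.ofReal (lam * (μ (K : Set X)).toReal) := by
              rw [ENNReal.ofReal_mul hlam, ENNReal.ofReal_toReal hμK.2.1]
          _ ≤ ENNReal.ofReal (∫ x in (K : Set X), φ x ∂μ) := ENNReal.ofReal_le_ofReal h1
          _ = ∫⁻ x in (K : Set X), ENNReal.ofReal (φ x) ∂μ :=
              ofReal_integral_eq_lintegral_ofReal hint.integrableOn
                (Filter.Eventually.of_forall hφ)
      have hchain : ENNReal.ofReal lam * μ (⋃₀ M)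
          ≤ ∫⁻ x in ⋃₀ M, ENNReal.ofReal (φ x) ∂μ := by
        rw [hμM, hlM, ← ENNReal.tsum_mul_left]
        exact ENNReal.tsum_le_tsum hper
      have hMmeas : MeasurableSet (⋃₀ M) := MeasurableSet.sUnion hMcnt hMmeasK
      have hHL2 := HL (⋃₀ M) hMmeas
      set s := (μ (⋃₀ M)).toReal with hsdef
      have hms : ENNReal.ofReal s = μ (⋃₀ M) := ENNReal.ofReal_toReal (measure_ne_top μ _)
      have hslam : ENNReal.ofReal lam * ENNReal.ofReal s
          ≤ ∫⁻ t in Set.Ioc (0:ℝ) s, ENNReal.ofReal (φs t) := by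
        rw [hms]
        exact hchain.trans hHL2
      have hs1 : s ≤ 1 := by
        simpa using ENNReal.toReal_mono ENNReal.one_ne_top (prob_le_one (μ := μ) (s := ⋃₀ M))
      have hfinal : ENNReal.ofReal s ≤ volume {t ∈ Set.Ioc (0:ℝ) 1 | lam ≤ F t} := by
        rcases le_or_gt s 0 with h | h
        · rw [ENNReal.ofReal_eq_zero.2 h]
          exact zero_le
        · have hlint_fin : ∫⁻ t in Set.Ioc (0:ℝ) s, ENNReal.ofReal (φs t) ≠ ⊤ := by
            refine ne_of_lt (lt_of_le_of_lt (lintegral_mono_set (Set.Ioc_subset_Ioc_right hs1)) ?_)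
            rw [← lint_eq]
            exact lint_top
          have hreal : lam * s ≤ ∫ u in Set.Ioc (0:ℝ) s, φs u := by
            have h2 : ENNReal.ofReal (lam * s)
                ≤ ∫⁻ t in Set.Ioc (0:ℝ) s, ENNReal.ofReal (φs t) := by
              rw [ENNReal.ofReal_mul hlam]
              exact hslam
            have h3 : ∫ u in Set.Ioc (0:ℝ) s, φs u
                = (∫⁻ t in Set.Ioc (0:ℝ) s, ENNReal.ofReal (φs t)).toReal :=
              integral_eq_lintegral_of_nonneg_ae
                ((ae_restrict_iff' measurableSet_Ioc).2 (Filter.Eventually.of_forall fun t ht =>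
                  hφs_nonneg t ⟨ht.1, ht.2.trans hs1⟩))
                (φs_aemeas s hs1).aestronglyMeasurable
            rw [h3]
            calc lam * s = (ENNReal.ofReal (lam * s)).toReal :=
                (ENNReal.toReal_ofReal (mul_nonneg hlam h.le)).symm
              _ ≤ _ := ENNReal.toReal_mono hlint_fin h2
          have hFs : lam ≤ F s := by
            show lam ≤ (1 / s) * ∫ u in Set.Ioc (0:ℝ) s, φs u
            rw [one_div_mul_eq_div, le_div_iff₀ h]
            linarith
          have hFt : ∀ t ∈ Set.Ioc (0:ℝ) s, lam ≤ F t := fun t ht =>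
            hFs.trans (F_anti ⟨ht.1, ht.2.trans hs1⟩ ⟨h, hs1⟩ ht.2)
          calc ENNReal.ofReal s = volume (Set.Ioc (0:ℝ) s) := by simp
            _ ≤ volume {t ∈ Set.Ioc (0:ℝ) 1 | lam ≤ F t} :=
                measure_mono (fun t ht => ⟨⟨ht.1, ht.2.trans hs1⟩, hFt t ht⟩)
      calc μ {x | lam < T.maximal φ x} ≤ μ (⋃₀ M) := measure_mono hcover
        _ = ENNReal.ofReal s := hms.symm
        _ ≤ _ := hfinal
  have dist_ge : ∀ b : ℝ, 0 ≤ b →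
      μ {x | b ≤ T.maximal φ x} ≤ volume {t ∈ Set.Ioc (0:ℝ) 1 | b ≤ F t} := by
    have sand : ∀ lam : ℝ, ∃ c, 0 ≤ c ∧ c ≤ 1 ∧
        Set.Ioo 0 c ⊆ {t ∈ Set.Ioc (0:ℝ) 1 | lam ≤ F t} ∧
        {t ∈ Set.Ioc (0:ℝ) 1 | lam ≤ F t} ⊆ Set.Ioc 0 c ∧
        volume {t ∈ Set.Ioc (0:ℝ) 1 | lam ≤ F t} = ENNReal.ofReal c := by
      intro lam
      refine sandwich_vol (fun t ht => ht.1) ?_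
      intro t ht t' h0 hle
      exact ⟨⟨h0, hle.trans ht.1.2⟩,
        le_trans ht.2 (F_anti ⟨h0, hle.trans ht.1.2⟩ ht.1 hle)⟩
    choose c hc0 hc1 hIoo hIoc hvol using sand
    intro b hb
    rcases eq_or_lt_of_le hb with rfl | hb0
    · have hall : {t ∈ Set.Ioc (0:ℝ) 1 | (0:ℝ) ≤ F t} = Set.Ioc (0:ℝ) 1 :=
        Set.ext fun t => ⟨fun h => h.1, fun h => ⟨h, F_nonneg t h⟩⟩
      rw [hall]
      have hv1 : volume (Set.Ioc (0:ℝ) 1) = 1 := by simp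
      rw [hv1]
      exact prob_le_one
    · set lamn : ℕ → ℝ := fun n => b - b / (n + 2) with hlamdef
      have hlam_nonneg : ∀ n : ℕ, 0 ≤ lamn n := by
        intro n
        have h2 : b / ((n:ℝ) + 2) ≤ b / 1 := by
          apply div_le_div_of_nonneg_left hb0.le one_pos
          linarith [Nat.cast_nonneg (α := ℝ) n]
        simp only [hlamdef]
        rw [div_one] at h2
        linarith
      have hlam_lt : ∀ n : ℕ, lamn n < b := by
        intro n
        have : 0 < b / ((n:ℝ) + 2) := by positivity
        simp only [hlamdef]
        linarith
      have hbound : ∀ n : ℕ, μ {x | b ≤ T.maximal φ x} ≤ ENNReal.ofReal (c (lamn n)) := by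
        intro n
        have hsubn : {x | b ≤ T.maximal φ x} ⊆ {x | lamn n < T.maximal φ x} :=
          fun x hx => lt_of_lt_of_le (hlam_lt n) hx
        calc μ {x | b ≤ T.maximal φ x} ≤ μ {x | lamn n < T.maximal φ x} := measure_mono hsubn
          _ ≤ volume {t ∈ Set.Ioc (0:ℝ) 1 | lamn n ≤ F t} := core (lamn n) (hlam_nonneg n)
          _ = ENNReal.ofReal (c (lamn n)) := hvol _
      have hbddb : BddBelow (Set.range fun n : ℕ => c (lamn n)) :=
        ⟨0, by rintro r ⟨n, rfl⟩; exact hc0 _⟩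
      set ci := ⨅ n : ℕ, c (lamn n) with hci
      have hfin2 : μ {x | b ≤ T.maximal φ x} ≤ ENNReal.ofReal ci := by
        have hr : (μ {x | b ≤ T.maximal φ x}).toReal ≤ ci := by
          refine le_ciInf fun n => ?_
          calc (μ {x | b ≤ T.maximal φ x}).toReal
              ≤ (ENNReal.ofReal (c (lamn n))).toReal :=
                ENNReal.toReal_mono ENNReal.ofReal_ne_top (hbound n)
            _ = c (lamn n) := ENNReal.toReal_ofReal (hc0 _)
        calc μ {x | b ≤ T.maximal φ x}
            = ENNReal.ofReal ((μ {x | b ≤ T.maximal φ x}).toReal) :=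
              (ENNReal.ofReal_toReal (measure_ne_top _ _)).symm
          _ ≤ ENNReal.ofReal ci := ENNReal.ofReal_le_ofReal hr
      have hsub : Set.Ioo 0 ci ⊆ {t ∈ Set.Ioc (0:ℝ) 1 | b ≤ F t} := by
        intro t ht
        have htn : ∀ n : ℕ, t ∈ {t ∈ Set.Ioc (0:ℝ) 1 | lamn n ≤ F t} := fun n =>
          hIoo (lamn n) ⟨ht.1, lt_of_lt_of_le ht.2 (ciInf_le hbddb n)⟩
        refine ⟨(htn 0).1, ?_⟩
        have hd : Filter.Tendsto (fun n : ℕ => (n:ℝ) + 2) Filter.atTop Filter.atTop :=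
          Filter.tendsto_atTop_add_const_right _ 2 tendsto_natCast_atTop_atTop
        have hq : Filter.Tendsto (fun n : ℕ => b / ((n:ℝ) + 2)) Filter.atTop (nhds 0) :=
          Filter.Tendsto.div_atTop tendsto_const_nhds hd
        have hten : Filter.Tendsto lamn Filter.atTop (nhds b) := by
          have := Filter.Tendsto.sub (tendsto_const_nhds (x := b)
            (f := Filter.atTop (α := ℕ))) hq
          simpa using this
        exact le_of_tendsto hten (Filter.Eventually.of_forall fun n => (htn n).2)
      calc μ {x | b ≤ T.maximal φ x} ≤ ENNReal.ofReal ci := hfin2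
        _ = volume (Set.Ioo 0 ci) := by simp
        _ ≤ volume {t ∈ Set.Ioc (0:ℝ) 1 | b ≤ F t} := measure_mono hsub
  have dist_gt : ∀ b : ℝ, 0 ≤ b →
      μ {x | b < T.maximal φ x} ≤ volume {t ∈ Set.Ioc (0:ℝ) 1 | b < F t} := by
    intro b hb
    have hun : {x | b < T.maximal φ x}
        = ⋃ n : ℕ, {x | b + 1 / ((n:ℝ) + 1) ≤ T.maximal φ x} := by
      ext x
      simp only [Set.mem_setOf_eq, Set.mem_iUnion]
      constructor
      · intro h
        have hd : 0 < T.maximal φ x - b := sub_pos.2 h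
        obtain ⟨n, hn⟩ := exists_nat_gt (1 / (T.maximal φ x - b))
        have hn' : 1 / (T.maximal φ x - b) < (n:ℝ) + 1 := hn.trans (by linarith)
        have h1 : 1 / ((n:ℝ) + 1) < T.maximal φ x - b :=
          (one_div_lt hd (by positivity)).1 hn'
        exact ⟨n, by linarith⟩
      · rintro ⟨n, hn⟩
        have : 0 < 1 / ((n:ℝ) + 1) := by positivity
        linarith
    rw [hun]
    have hdir : Directed (· ⊆ ·)
        (fun n : ℕ => {x | b + 1 / ((n:ℝ) + 1) ≤ T.maximal φ x}) := by
      intro m n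
      refine ⟨max m n, ?_, ?_⟩ <;> intro x hx <;> simp only [Set.mem_setOf_eq] at hx ⊢
      · have h1 : 1 / ((max m n : ℕ):ℝ) ≤ 1 / (m:ℝ) ∨ True := Or.inr trivial
        have h2 : 1 / (((max m n : ℕ):ℝ) + 1) ≤ 1 / ((m:ℝ) + 1) := by
          apply one_div_le_one_div_of_le (by positivity)
          have : (m:ℝ) ≤ ((max m n : ℕ):ℝ) := Nat.cast_le.2 (le_max_left m n)
          linarith
        linarith
      · have h2 : 1 / (((max m n : ℕ):ℝ) + 1) ≤ 1 / ((n:ℝ) + 1) := by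
          apply one_div_le_one_div_of_le (by positivity)
          have : (n:ℝ) ≤ ((max m n : ℕ):ℝ) := Nat.cast_le.2 (le_max_right m n)
          linarith
        linarith
    rw [hdir.measure_iUnion]
    refine iSup_le fun n => ?_
    have hb' : (0:ℝ) ≤ b + 1 / ((n:ℝ) + 1) := by positivity
    have hpos : (0:ℝ) < 1 / ((n:ℝ) + 1) := by positivity
    calc μ {x | b + 1 / ((n:ℝ) + 1) ≤ T.maximal φ x}
        ≤ volume {t ∈ Set.Ioc (0:ℝ) 1 | b + 1 / ((n:ℝ) + 1) ≤ F t} := dist_ge _ hb'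
      _ ≤ volume {t ∈ Set.Ioc (0:ℝ) 1 | b < F t} :=
          measure_mono (fun t ht => ⟨ht.1, lt_of_lt_of_le (by linarith) ht.2⟩)
  have key : ∀ p : ℝ, μ {x | p < G (T.maximal φ x)} ≤
      volume {t ∈ Set.Ioc (0:ℝ) 1 | p < G (F t)} := by
    intro p
    set A := {y : ℝ | 0 ≤ y ∧ p < G y} with hA
    by_cases hAe : A = ∅
    · have h0 : {x | p < G (T.maximal φ x)} = ∅ := by
        ext x
        simp only [Set.mem_setOf_eq, Set.mem_empty_iff_false, iff_false, not_lt]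
        by_contra h
        push_neg at h
        exact Set.eq_empty_iff_forall_notMem.1 hAe _ ⟨M_nonneg x, h⟩
      rw [h0, measure_empty]
      exact zero_le
    · have hAne : A.Nonempty := Set.nonempty_iff_ne_empty.2 hAe
      have hbdd : BddBelow A := ⟨0, fun y hy => hy.1⟩
      set b := sInf A with hbdef
      have hb0 : 0 ≤ b := le_csInf hAne fun y hy => hy.1
      have hup : ∀ y : ℝ, 0 ≤ y → b < y → y ∈ A := by
        intro y hy hby
        obtain ⟨y', hy', hlt⟩ := exists_lt_of_csInf_lt hAne hby
        exact ⟨hy, lt_of_lt_of_le hy'.2 (hG_mono hy'.1 hy hlt.le)⟩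
      by_cases hbA : b ∈ A
      · have hLeq : {x | p < G (T.maximal φ x)} = {x | b ≤ T.maximal φ x} := by
          ext x
          simp only [Set.mem_setOf_eq]
          constructor
          · intro h
            exact csInf_le hbdd ⟨M_nonneg x, h⟩
          · intro h
            rcases eq_or_lt_of_le h with h' | h'
            · rw [← h']; exact hbA.2
            · exact (hup _ (M_nonneg x) h').2
        have hReq : {t ∈ Set.Ioc (0:ℝ) 1 | b ≤ F t} ⊆ {t ∈ Set.Ioc (0:ℝ) 1 | p < G (F t)} := by
          intro t ht
          refine ⟨ht.1, ?_⟩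
          rcases eq_or_lt_of_le ht.2 with h' | h'
          · rw [← h']; exact hbA.2
          · exact (hup _ (F_nonneg t ht.1) h').2
        rw [hLeq]
        exact (dist_ge b hb0).trans (measure_mono hReq)
      · have hmemA : ∀ y : ℝ, 0 ≤ y → (y ∈ A ↔ b < y) := by
          intro y hy
          constructor
          · intro hyA
            rcases eq_or_lt_of_le (csInf_le hbdd hyA) with h' | h'
            · exact absurd (show b ∈ A by rw [hbdef, h']; exact hyA) hbA
            · exact h'
          · exact hup y hy
        have hLeq : {x | p < G (T.maximal φ x)} = {x | b < T.maximal φ x} := by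
          ext x
          simp only [Set.mem_setOf_eq]
          constructor
          · intro h
            exact (hmemA _ (M_nonneg x)).1 ⟨M_nonneg x, h⟩
          · intro h
            exact ((hmemA _ (M_nonneg x)).2 h).2
        have hReq : {t ∈ Set.Ioc (0:ℝ) 1 | b < F t} ⊆ {t ∈ Set.Ioc (0:ℝ) 1 | p < G (F t)} :=
          fun t ht => ⟨ht.1, ((hmemA _ (F_nonneg t ht.1)).2 ht.2).2⟩
        rw [hLeq]
        exact (dist_gt b hb0).trans (measure_mono hReq)
  -- assemble by the layer-cake formula
  have hGM_nn : 0 ≤ᵐ[μ] fun x => G (T.maximal φ x) :=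
    Filter.Eventually.of_forall fun x => hG_nonneg _ (M_nonneg x)
  have hGF_meas : AEMeasurable (fun t => G (F t)) (volume.restrict (Set.Ioc (0:ℝ) 1)) :=
    hG_meas.comp_aemeasurable (aemeasurable_restrict_of_antitoneOn measurableSet_Ioc F_anti)
  have hGF_nn : 0 ≤ᵐ[volume.restrict (Set.Ioc (0:ℝ) 1)] fun t => G (F t) :=
    (ae_restrict_iff' measurableSet_Ioc).2
      (Filter.Eventually.of_forall fun t ht => hG_nonneg _ (F_nonneg t ht))
  rw [lintegral_eq_lintegral_meas_lt μ hGM_nn (hG_meas.comp M_meas).aemeasurable,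
    lintegral_eq_lintegral_meas_lt (volume.restrict (Set.Ioc (0:ℝ) 1)) hGF_nn hGF_meas]
  apply lintegral_mono
  intro p
  show μ {x | p < G (T.maximal φ x)} ≤ (volume.restrict (Set.Ioc (0:ℝ) 1)) {t | p < G (F t)}
  rw [Measure.restrict_apply' measurableSet_Ioc]
  refine (key p).trans (le_of_eq ?_)
  congr 1
  ext t
  exact and_comm
end
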